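/- arXiv:2408.00250 — 9 statements merged into one kernel-verified Lean document; each statement's English description precedes it below -/
import Mathlib

section
/- Let d, j, h be integers with d > j > 0 and |h| ≥ 3, and let ε be a real number with 1/|h| < ε < 1 − 1/|h|. Then the polynomial f_{d,j,h}(x) = x^d − h x^j + 1 has exactly d − j complex roots (counted with multiplicity) z satisfying ((1−ε)|h|)^{1/(d−j)} < |z| < ((1+ε)|h|)^{1/(d−j)}, and exactly j complex roots (counted with multiplicity) z satisfying ((1+ε)|h|)^{−1/j} < |z| < ((1−ε)|h|)^{−1/j}. -/
/-!
On the unit circle `|h z^j| = |h| > 2 ≥ |z^d + t|` for `0 ≤ t ≤ 1`, so no member of the family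
`x^d - h x^j + t` has a root there. By the argument principle the number of roots in the unit disk
is then a continuous integer-valued function of `t`, hence constant, and at `t = 0` it is `j`
(the `j`-fold root `0` of `x^j (x^{d-j} - h)`). A root outside the disk satisfies
`| |z|^{d-j} - |h| | = |z|^{-j} < 1` and a root inside satisfies
`| |h| |z|^j - 1 | ≤ |z|^d < |z|^j`; the bounds on `ε` put these two bands inside the two annuli.
-/

open Polynomial Metric Complex Set Real

theorem circleIntegral_sub_inv_of_notMem_closedBall {c w : ℂ} {R : ℝ} (hR : 0 ≤ R)
    (hw : w ∉ closedBall c R) : (∮ z in C(c, R), (z - w)⁻¹) = 0 := by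
  refine DiffContOnCl.circleIntegral_eq_zero hR ?_
  refine DifferentiableOn.diffContOnCl_ball (U := {w}ᶜ) ?_ (by simpa using hw)
  exact ((differentiable_id.sub_const w).differentiableOn).inv
    fun z hz => sub_ne_zero.2 hz

theorem circleIntegral_multiset_sum_sub_inv {c : ℂ} {R : ℝ} (hR : 0 ≤ R) (S : Multiset ℂ)
    (hS : ∀ w ∈ S, w ∉ sphere c R) :
    (∮ z in C(c, R), (S.map fun w => (z - w)⁻¹).sum) =
      2 * π * I * Multiset.card (S.filter fun w => dist w c < R) := by
  induction S using Multiset.induction_on with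
  | empty => simp [circleIntegral]
  | cons w S ih =>
    have hw := hS w (Multiset.mem_cons_self w S)
    have hS' : ∀ v ∈ S, v ∉ sphere c R := fun v hv => hS v (Multiset.mem_cons_of_mem hv)
    simp only [Multiset.map_cons, Multiset.sum_cons]
    rw [circleIntegral.integral_add _ _, ih hS', Multiset.filter_cons]
    · split_ifs with hwb
      · rw [circleIntegral.integral_sub_inv_of_mem_ball hwb, Multiset.card_add,
          Multiset.card_singleton]
        push_cast
        ring
      · have : w ∉ closedBall c R := fun hwR => hw (by
          rw [mem_sphere]; exact le_antisymm hwR (not_lt.1 hwb))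
        rw [circleIntegral_sub_inv_of_notMem_closedBall hR this]; simp
    · exact circleIntegrable_sub_inv_iff.2 (.inr (by rwa [abs_of_nonneg hR]))
    · refine ContinuousOn.circleIntegrable hR (continuousOn_multiset_sum _ fun v hv => ?_)
      exact (continuous_sub_right v).continuousOn.inv₀ fun z hz h =>
        hS' v hv (sub_eq_zero.1 h ▸ hz)

theorem Polynomial.circleIntegral_eval_derivative_div_eval {p : ℂ[X]} {c : ℂ} {R : ℝ}
    (hR : 0 ≤ R) (hp : ∀ z ∈ sphere c R, p.eval z ≠ 0) :
    (∮ z in C(c, R), p.derivative.eval z / p.eval z) =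
      2 * π * I * Multiset.card (p.roots.filter fun w => dist w c < R) := by
  rw [← circleIntegral_multiset_sum_sub_inv hR _ fun w hw hwc =>
    hp w hwc (isRoot_of_mem_roots hw)]
  refine circleIntegral.integral_congr hR fun z hz => ?_
  simp only [(IsAlgClosed.splits p).eval_derivative_div_eval_of_ne_zero (hp z hz), one_div]

theorem Polynomial.isLocallyConstant_card_roots_filter_dist_lt {T : Type*} [TopologicalSpace T]
    {P : T → ℂ[X]} (hP : Continuous fun q : T × ℂ => (P q.1).eval q.2)
    (hP' : Continuous fun q : T × ℂ => (P q.1).derivative.eval q.2) {c : ℂ} {R : ℝ}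
    (hR : 0 ≤ R) (hne : ∀ t, ∀ z ∈ sphere c R, (P t).eval z ≠ 0) :
    IsLocallyConstant fun t => Multiset.card ((P t).roots.filter fun w => dist w c < R) := by
  set count := fun t => Multiset.card ((P t).roots.filter fun w => dist w c < R)
  have hcount : ∀ t, (count t : ℝ) =
      ((2 * π * I)⁻¹ * ∮ z in C(c, R), (P t).derivative.eval z / (P t).eval z).re := by
    intro t
    rw [circleIntegral_eval_derivative_div_eval hR (hne t),
      inv_mul_cancel_left₀ (by simp [pi_ne_zero])]
    simp [count]
  have hcont : Continuous fun t => (count t : ℝ) := by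
    simp only [hcount]
    refine continuous_re.comp (continuous_const.mul ?_)
    refine intervalIntegral.continuous_parametric_intervalIntegral_of_continuous' ?_ _ _
    have hcm : Continuous fun q : T × ℝ => (q.1, circleMap c R q.2) := by fun_prop
    have hderiv : Continuous (deriv (circleMap c R)) :=
      (by fun_prop : Continuous fun θ => circleMap 0 R θ * I).congr
        fun θ => (deriv_circleMap c R θ).symm
    exact (hderiv.comp continuous_snd).smul ((hP'.comp hcm).div (hP.comp hcm)
      fun q => hne q.1 _ (circleMap_mem_sphere c hR q.2))
  exact (IsLocallyConstant.iff_continuous _).2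
    (Nat.isClosedEmbedding_coe_real.continuous_iff.2 hcont)

section Trinomial

variable {d j : ℕ} {h : ℂ}

theorem natDegree_trinomial (hjd : j < d) (c : ℂ) :
    (X ^ d - C h * X ^ j + C c : ℂ[X]).natDegree = d := by
  rw [natDegree_add_C, natDegree_sub_eq_left_of_natDegree_lt, natDegree_X_pow]
  exact (natDegree_C_mul_X_pow_le h j).trans_lt (by rwa [natDegree_X_pow])

theorem trinomial_ne_zero_of_norm_eq_one (hh : 2 < ‖h‖) {c z : ℂ} (hc : ‖c‖ ≤ 1)
    (hz : ‖z‖ = 1) : z ^ d - h * z ^ j + c ≠ 0 := by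
  intro hroot
  have : ‖h * z ^ j‖ ≤ ‖z ^ d‖ + ‖c‖ := by
    rw [show h * z ^ j = z ^ d + c by linear_combination -hroot]
    exact norm_add_le _ _
  simp only [norm_mul, norm_pow, hz, one_pow, mul_one] at this
  linarith

theorem card_roots_X_pow_sub_C_mul_X_pow_filter_norm_lt_one (hjd : j < d) (hh : 1 < ‖h‖) :
    Multiset.card ((X ^ d - C h * X ^ j : ℂ[X]).roots.filter fun w => ‖w‖ < 1) = j := by
  have hfactor : (X ^ d - C h * X ^ j : ℂ[X]) = X ^ j * (X ^ (d - j) - C h) := by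
    rw [mul_sub, ← pow_add, Nat.add_sub_cancel' hjd.le, mul_comm]
  have houter : ∀ w ∈ (X ^ (d - j) - C h : ℂ[X]).roots, ¬ ‖w‖ < 1 := by
    intro w hw hw1
    have hpow : w ^ (d - j) = h := by simpa [sub_eq_zero] using isRoot_of_mem_roots hw
    have : ‖w‖ ^ (d - j) ≤ 1 := pow_le_one₀ (norm_nonneg w) hw1.le
    rw [← norm_pow, hpow] at this
    linarith
  rw [hfactor, roots_mul (mul_ne_zero (pow_ne_zero _ X_ne_zero)
      (X_pow_sub_C_ne_zero (Nat.sub_pos_of_lt hjd) h)), Multiset.filter_add,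
    Multiset.filter_eq_nil.2 houter, roots_X_pow, Multiset.nsmul_singleton,
    Multiset.filter_eq_self.2 fun w hw => by simp [Multiset.eq_of_mem_replicate hw]]
  simp

theorem card_roots_trinomial_filter_norm_lt_one (hjd : j < d) (hh : 2 < ‖h‖) :
    Multiset.card ((X ^ d - C h * X ^ j + 1 : ℂ[X]).roots.filter fun w => ‖w‖ < 1) = j := by
  have hconst := Polynomial.isLocallyConstant_card_roots_filter_dist_lt
    (P := fun t : Icc (0 : ℝ) 1 => X ^ d - C h * X ^ j + C ((t : ℝ) : ℂ))
    (by simp only [eval_add, eval_sub, eval_mul, eval_pow, eval_X, eval_C]; fun_prop)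
    (by simp only [derivative_add, derivative_C, add_zero]; fun_prop) (c := 0) zero_le_one
    fun t z hz => by
      simpa using trinomial_ne_zero_of_norm_eq_one hh (by simpa [abs_of_nonneg t.2.1] using t.2.2)
        (by simpa using hz)
  have := hconst.apply_eq_of_preconnectedSpace ⟨1, by simp⟩ ⟨0, by simp⟩
  simp only [ofReal_one, map_one, ofReal_zero, map_zero, add_zero, dist_zero_right] at this
  rw [this, card_roots_X_pow_sub_C_mul_X_pow_filter_norm_lt_one hjd (by linarith)]

theorem card_roots_trinomial_filter_one_lt_norm (hjd : j < d) (hh : 2 < ‖h‖) :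
    Multiset.card ((X ^ d - C h * X ^ j + 1 : ℂ[X]).roots.filter fun w => 1 < ‖w‖) =
      d - j := by
  set p : ℂ[X] := X ^ d - C h * X ^ j + 1
  have hnot : p.roots.filter (fun w => ¬ ‖w‖ < 1) = p.roots.filter fun w => 1 < ‖w‖ := by
    refine Multiset.filter_congr fun w hw => ?_
    have hw1 : ‖w‖ ≠ 1 := fun hw1 =>
      trinomial_ne_zero_of_norm_eq_one hh (c := 1) (by simp) hw1
      (by simpa [p] using isRoot_of_mem_roots hw)
    rw [not_lt, le_iff_lt_or_eq, or_iff_left hw1.symm]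
  have hdeg : p.natDegree = d := by simpa [p] using natDegree_trinomial (h := h) hjd 1
  have hsplit := congrArg Multiset.card (Multiset.filter_add_not (fun w => ‖w‖ < 1) p.roots)
  rw [Multiset.card_add, hnot, card_roots_trinomial_filter_norm_lt_one hjd hh,
    IsAlgClosed.card_roots_eq_natDegree, hdeg] at hsplit
  omega

theorem trinomial_root_abs_norm_pow_sub_norm_lt_one {z : ℂ} (hj : 0 < j) (hjd : j ≤ d)
    (hz : z ^ d - h * z ^ j + 1 = 0) (hz1 : 1 < ‖z‖) : |‖z‖ ^ (d - j) - ‖h‖| < 1 := by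
  have hfactor : z ^ j * (z ^ (d - j) - h) = -1 := by
    rw [mul_sub, ← pow_add, Nat.add_sub_cancel' hjd]
    linear_combination hz
  have hnorm : ‖z‖ ^ j * ‖z ^ (d - j) - h‖ = 1 := by
    simpa [norm_mul, norm_pow] using congrArg norm hfactor
  have hzj : 1 < ‖z‖ ^ j := one_lt_pow₀ hz1 hj.ne'
  calc |‖z‖ ^ (d - j) - ‖h‖| ≤ ‖z ^ (d - j) - h‖ := by
        simpa only [norm_pow] using abs_norm_sub_norm_le (z ^ (d - j)) h
    _ < 1 := by nlinarith [norm_nonneg (z ^ (d - j) - h)]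

theorem trinomial_root_abs_norm_mul_norm_pow_sub_one_lt {z : ℂ} (hj : 0 < j) (hjd : j < d)
    (hz : z ^ d - h * z ^ j + 1 = 0) (hz1 : ‖z‖ < 1) :
    |‖h‖ * ‖z‖ ^ j - 1| < ‖z‖ ^ j := by
  have hz0 : z ≠ 0 := by
    rintro rfl
    simp [zero_pow hj.ne', zero_pow (hj.trans hjd).ne'] at hz
  have hhz : h * z ^ j = 1 + z ^ d := by linear_combination -hz
  calc |‖h‖ * ‖z‖ ^ j - 1| = |‖1 + z ^ d‖ - ‖(1 : ℂ)‖| := by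
        rw [← norm_pow, ← norm_mul, hhz, norm_one]
    _ ≤ ‖1 + z ^ d - 1‖ := abs_norm_sub_norm_le _ _
    _ = ‖z‖ ^ d := by simp [norm_pow]
    _ < ‖z‖ ^ j := pow_lt_pow_right_of_lt_one₀ (norm_pos_iff.2 hz0) hz1 hjd

theorem trinomial_root_mem_outer_annulus_iff {z : ℂ} {A B : ℝ} (hj : 0 < j) (hjd : j < d)
    (hA : 1 ≤ A) (hAh : A ≤ ‖h‖ - 1) (hBh : ‖h‖ + 1 ≤ B)
    (hz : z ^ d - h * z ^ j + 1 = 0) :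
    (A ^ ((d - j : ℕ) : ℝ)⁻¹ < ‖z‖ ∧ ‖z‖ < B ^ ((d - j : ℕ) : ℝ)⁻¹) ↔
      1 < ‖z‖ := by
  have hm : (0 : ℝ) < (d - j : ℕ) := by exact_mod_cast Nat.sub_pos_of_lt hjd
  constructor
  · rintro ⟨hAz, -⟩
    exact (Real.one_le_rpow hA (inv_nonneg.2 hm.le)).trans_lt hAz
  · intro hz1
    have := abs_lt.1 (trinomial_root_abs_norm_pow_sub_norm_lt_one hj hjd.le hz hz1)
    rw [Real.rpow_inv_lt_iff_of_pos (by linarith) (norm_nonneg z) hm,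
      Real.lt_rpow_inv_iff_of_pos (norm_nonneg z) (by linarith) hm, Real.rpow_natCast]
    constructor <;> linarith

theorem trinomial_root_mem_inner_annulus_iff {z : ℂ} {A B : ℝ} (hj : 0 < j) (hjd : j < d)
    (hA : 1 ≤ A) (hAh : A ≤ ‖h‖ - 1) (hBh : ‖h‖ + 1 ≤ B)
    (hz : z ^ d - h * z ^ j + 1 = 0) :
    (B ^ (-(j : ℝ)⁻¹) < ‖z‖ ∧ ‖z‖ < A ^ (-(j : ℝ)⁻¹)) ↔ ‖z‖ < 1 := by
  have hj' : (0 : ℝ) < j := by exact_mod_cast hj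
  have hA0 : 0 < A := by linarith
  have hB0 : 0 < B := by linarith
  rw [Real.rpow_neg hA0.le, Real.rpow_neg hB0.le, ← Real.inv_rpow hA0.le,
    ← Real.inv_rpow hB0.le]
  constructor
  · rintro ⟨-, hzA⟩
    exact hzA.trans_le (Real.rpow_le_one (inv_nonneg.2 hA0.le) (inv_le_one_of_one_le₀ hA)
      (inv_nonneg.2 hj'.le))
  · intro hz1
    have := abs_lt.1 (trinomial_root_abs_norm_mul_norm_pow_sub_one_lt hj hjd hz hz1)
    have hzj := pow_nonneg (norm_nonneg z) j
    rw [Real.rpow_inv_lt_iff_of_pos (inv_nonneg.2 hB0.le) (norm_nonneg z) hj',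
      Real.lt_rpow_inv_iff_of_pos (norm_nonneg z) (inv_nonneg.2 hA0.le) hj', Real.rpow_natCast,
      inv_lt_iff_one_lt_mul₀' hB0, ← one_div, lt_div_iff₀' hA0]
    constructor <;> nlinarith

end Trinomial

open Polynomial in
/-- For integers `d > j > 0` and `|h| ≥ 3`, and any real `ε` with
`1/|h| < ε < 1 - 1/|h|`, the polynomial `x^d - h x^j + 1` has exactly `d - j` roots
(with multiplicity) in the annulus `((1-ε)|h|)^{1/(d-j)} < |z| < ((1+ε)|h|)^{1/(d-j)}`
and exactly `j` roots in the annulus `((1+ε)|h|)^{-1/j} < |z| < ((1-ε)|h|)^{-1/j}`. -/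
theorem trinomial_roots_annuli (d j : ℕ) (h : ℤ) (hj : 0 < j) (hjd : j < d)
    (hh : 3 ≤ |h|) (ε : ℝ) (hε1 : 1 / |(h : ℝ)| < ε) (hε2 : ε < 1 - 1 / |(h : ℝ)|) :
    Multiset.card ((X ^ d - C (h : ℂ) * X ^ j + 1 : Polynomial ℂ).roots.filter
        (fun z => ((1 - ε) * |(h : ℝ)|) ^ (((d : ℝ) - (j : ℝ))⁻¹) < ‖z‖ ∧
          ‖z‖ < ((1 + ε) * |(h : ℝ)|) ^ (((d : ℝ) - (j : ℝ))⁻¹))) = d - j ∧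
    Multiset.card ((X ^ d - C (h : ℂ) * X ^ j + 1 : Polynomial ℂ).roots.filter
        (fun z => ((1 + ε) * |(h : ℝ)|) ^ (-((j : ℝ)⁻¹)) < ‖z‖ ∧
          ‖z‖ < ((1 - ε) * |(h : ℝ)|) ^ (-((j : ℝ)⁻¹)))) = j := by
  have hnorm : ‖(h : ℂ)‖ = |(h : ℝ)| := Complex.norm_intCast h
  have hH : (3 : ℝ) ≤ |(h : ℝ)| := by rw [← Int.cast_abs]; exact_mod_cast hh
  have hεH : 1 < ε * |(h : ℝ)| := (div_lt_iff₀ (by linarith)).1 hε1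
  have hA : 1 < (1 - ε) * |(h : ℝ)| := (div_lt_iff₀ (by linarith)).1 (by linarith)
  have hAh : (1 - ε) * |(h : ℝ)| ≤ ‖(h : ℂ)‖ - 1 := by rw [hnorm]; linarith
  have hBh : ‖(h : ℂ)‖ + 1 ≤ (1 + ε) * |(h : ℝ)| := by rw [hnorm]; linarith
  have hroot : ∀ z ∈ (X ^ d - C (h : ℂ) * X ^ j + 1 : ℂ[X]).roots,
      z ^ d - h * z ^ j + 1 = 0 := fun z hz => by simpa using isRoot_of_mem_roots hz
  rw [← Nat.cast_sub hjd.le, Multiset.filter_congr fun z hz =>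
      trinomial_root_mem_outer_annulus_iff hj hjd hA.le hAh hBh (hroot z hz),
    Multiset.filter_congr fun z hz =>
      trinomial_root_mem_inner_annulus_iff hj hjd hA.le hAh hBh (hroot z hz)]
  exact ⟨card_roots_trinomial_filter_one_lt_norm hjd (by linarith),
    card_roots_trinomial_filter_norm_lt_one hjd (by linarith)⟩
end

section
/- Let d, j, h be integers with d > j > 0 and |h| ≥ 3. Then the polynomial f_{d,j,h}(x) = x^d − h x^j + 1 has exactly j complex roots (counted with multiplicity) z in the annulus (2/(3|h|))^{1/j} < |z| < (2/|h|)^{1/j}, and exactly d − j complex roots (counted with multiplicity) z in the annulus (|h|/2)^{1/(d−j)} < |z| < (3|h|/2)^{1/(d−j)}. -/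
/-!
Write `d = j + m`. A root satisfies `z ^ j * (h - z ^ m) = 1`, hence
`‖z‖ ^ j * |‖h‖ - ‖z‖ ^ m| ≤ 1 ≤ ‖z‖ ^ j * (‖h‖ + ‖z‖ ^ m)`. For `‖h‖ > 2` this rules out
`‖z‖ = 1` and puts the roots inside the unit circle into the inner annulus and those outside into
the outer one. As there are `j + m` roots in all, it suffices to exhibit `j` distinct roots inside
the unit circle and `m` outside.

For a `j`-th root of unity `ω` and `c ^ j = h⁻¹`, the equation is solved by `z = ω c (1 + ε)^{1/j}`
with `ε = z ^ (j + m)` a fixed point of `ε ↦ (ω c) ^ (j + m) (1 + ε) ^ ((j + m) / j)`, which for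
`‖h‖ ≥ 3` is a contraction of the disc `‖ε‖ ≤ 1/2`. Since `ω` is recovered from `z`, this gives `j`
distinct roots. The roots outside are the inverses of those of the trinomial with `j` and `m`
exchanged.
-/

open Polynomial

theorem Real.self_le_two_rpow {x : ℝ} (hx : 0 ≤ x) : x ≤ 2 ^ x := by
  have hlog : 1 ≤ 2 * Real.log 2 := by linarith [Real.log_two_gt_d9]
  calc x ≤ 2 * (x * Real.log 2) := by nlinarith
    _ ≤ Real.exp (x * Real.log 2) := Real.two_mul_le_exp
    _ = 2 ^ x := by rw [Real.rpow_def_of_pos two_pos, mul_comm]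

theorem Real.rpow_inv_lt_and_lt_rpow_inv_iff {a b x : ℝ} (ha : 0 ≤ a) (hb : 0 ≤ b) (hx : 0 ≤ x)
    {n : ℕ} (hn : n ≠ 0) :
    a ^ (n⁻¹ : ℝ) < x ∧ x < b ^ (n⁻¹ : ℝ) ↔ a < x ^ n ∧ x ^ n < b := by
  have hn' : (0 : ℝ) < n := by positivity
  rw [Real.rpow_inv_lt_iff_of_pos ha hx hn', Real.lt_rpow_inv_iff_of_pos hx hb hn',
    Real.rpow_natCast]

theorem inv_rpow_mul_three_halves_rpow_le {H q : ℝ} (hH : 3 ≤ H) (hq : 1 ≤ q) :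
    H⁻¹ ^ q * (3 / 2) ^ q ≤ 1 / 2 := by
  have hH' : H⁻¹ * (3 / 2) ≤ 1 / 2 := by
    rw [inv_mul_le_iff₀ (by positivity)]; linarith
  rw [← Real.mul_rpow (by positivity) (by norm_num)]
  calc (H⁻¹ * (3 / 2)) ^ q ≤ (1 / 2) ^ q := by gcongr
    _ ≤ (1 / 2) ^ (1 : ℝ) := Real.rpow_le_rpow_of_exponent_ge (by norm_num) (by norm_num) hq
    _ = 1 / 2 := Real.rpow_one _

theorem inv_rpow_mul_mul_three_halves_rpow_sub_one_lt {H q : ℝ} (hH : 3 ≤ H) (hq : 1 ≤ q) :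
    H⁻¹ ^ q * q * (3 / 2) ^ (q - 1) < 1 := by
  have hH' : H⁻¹ ≤ 3⁻¹ := inv_anti₀ (by norm_num) hH
  calc H⁻¹ ^ q * q * (3 / 2) ^ (q - 1) ≤ 3⁻¹ ^ q * 2 ^ q * ((3 / 2) ^ q / (3 / 2)) := by
        rw [Real.rpow_sub_one (by norm_num)]
        gcongr
        exact Real.self_le_two_rpow (by linarith)
    _ = (3⁻¹ * 2 * (3 / 2)) ^ q * (2 / 3) := by
        rw [Real.mul_rpow (by norm_num) (by norm_num), Real.mul_rpow (by norm_num) (by norm_num)]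
        ring
    _ < 1 := by norm_num

theorem exists_eq_mul_one_add_cpow {A : ℂ} {q : ℝ} (hq : 1 ≤ q)
    (hA : ‖A‖ * (3 / 2) ^ q ≤ 1 / 2) (hA' : ‖A‖ * q * (3 / 2) ^ (q - 1) < 1) :
    ∃ ε : ℂ, ‖ε‖ ≤ 1 / 2 ∧ A * (1 + ε) ^ (q : ℂ) = ε := by
  set s := Metric.closedBall (0 : ℂ) (1 / 2)
  have hnorm : ∀ ε ∈ s, ‖1 + ε‖ ≤ 3 / 2 := fun ε hε => by
    have := mem_closedBall_zero_iff.mp hε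
    calc ‖1 + ε‖ ≤ ‖(1 : ℂ)‖ + ‖ε‖ := norm_add_le _ _
      _ ≤ 3 / 2 := by rw [norm_one]; linarith
  have hslit : ∀ ε ∈ s, 1 + ε ∈ Complex.slitPlane := fun ε hε => by
    have := (abs_le.mp ((Complex.abs_re_le_norm ε).trans (mem_closedBall_zero_iff.mp hε))).1
    refine Complex.mem_slitPlane_iff.mpr (Or.inl ?_)
    simp only [Complex.add_re, Complex.one_re]
    linarith
  set G : ℂ → ℂ := fun ε => A * (1 + ε) ^ (q : ℂ)
  have hmaps : Set.MapsTo G s s := fun ε hε => by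
    rw [mem_closedBall_zero_iff, norm_mul, Complex.norm_cpow_real]
    calc ‖A‖ * ‖1 + ε‖ ^ q ≤ ‖A‖ * (3 / 2) ^ q := by gcongr; exact hnorm ε hε
      _ ≤ 1 / 2 := hA
  let K := ‖A‖ * q * (3 / 2) ^ (q - 1)
  have hlip : LipschitzOnWith K.toNNReal G s := by
    refine (convex_closedBall _ _).lipschitzOnWith_of_nnnorm_hasDerivWithin_le
      (f' := fun ε => A * ((q : ℂ) * (1 + ε) ^ ((q : ℂ) - 1) * 1)) (fun ε hε => ?_) (fun ε hε => ?_)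
    · exact ((((hasDerivAt_id ε).const_add 1).cpow_const (hslit ε hε)).const_mul A).hasDerivWithinAt
    · have hq1 : (q : ℂ) - 1 = ((q - 1 : ℝ) : ℂ) := by push_cast; rfl
      rw [← NNReal.coe_le_coe, coe_nnnorm, Real.coe_toNNReal _ (by positivity), mul_one,
        norm_mul, norm_mul, hq1, Complex.norm_cpow_real, Complex.norm_real,
        Real.norm_of_nonneg (by linarith), ← mul_assoc]
      show _ ≤ ‖A‖ * q * (3 / 2) ^ (q - 1)
      gcongr
      exact hnorm ε hε
  have hK : ContractingWith K.toNNReal (hmaps.restrict G s s) :=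
    ⟨Real.toNNReal_lt_one.mpr hA', hlip.mapsToRestrict hmaps⟩
  obtain ⟨ε, hε, hfix, -⟩ := hK.exists_fixedPoint' Metric.isClosed_closedBall.isComplete hmaps
    (Metric.mem_closedBall_self (by norm_num)) (edist_ne_top _ _)
  exact ⟨ε, mem_closedBall_zero_iff.mp hε, hfix⟩

theorem Finset.card_le_card_filter_of_forall {α : Type*} {s : Multiset α} {S : Finset α}
    {P : α → Prop} [DecidablePred P] (hS : ∀ x ∈ S, x ∈ s ∧ P x) :
    S.card ≤ Multiset.card (s.filter P) :=
  Multiset.card_le_card ((Multiset.le_iff_subset S.nodup).mpr fun x hx =>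
    Multiset.mem_filter.mpr (hS x hx))

section Trinomial

variable {j m : ℕ} {h z : ℂ}

theorem X_pow_add_sub_C_mul_X_pow_add_one_eq_trinomial :
    (X ^ (j + m) - C h * X ^ j + 1 : ℂ[X]) = trinomial 0 j (j + m) 1 (-h) 1 := by
  simp only [trinomial_def, map_one, map_neg, pow_zero, one_mul, neg_mul]
  ring

theorem card_roots_X_pow_add_sub_C_mul_X_pow_add_one (hj : 0 < j) (hm : 0 < m) :
    Multiset.card (X ^ (j + m) - C h * X ^ j + 1 : ℂ[X]).roots = j + m := by
  rw [IsAlgClosed.card_roots_eq_natDegree, X_pow_add_sub_C_mul_X_pow_add_one_eq_trinomial,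
    trinomial_natDegree hj (by omega) one_ne_zero]

theorem mem_roots_X_pow_add_sub_C_mul_X_pow_add_one (hj : 0 < j) (hm : 0 < m) :
    z ∈ (X ^ (j + m) - C h * X ^ j + 1 : ℂ[X]).roots ↔ z ^ j * (h - z ^ m) = 1 := by
  have hp : (X ^ (j + m) - C h * X ^ j + 1 : ℂ[X]) ≠ 0 := by
    rw [X_pow_add_sub_C_mul_X_pow_add_one_eq_trinomial]
    exact (trinomial_monic hj (by omega)).ne_zero
  rw [mem_roots hp, IsRoot, eval_add, eval_sub, eval_mul, eval_pow, eval_pow, eval_X, eval_C,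
    eval_one, pow_add]
  constructor <;> intro hz <;> linear_combination -hz

theorem norm_pow_mul_abs_sub_le_one_le_norm_pow_mul_add (hz : z ^ j * (h - z ^ m) = 1) :
    ‖z‖ ^ j * |‖h‖ - ‖z‖ ^ m| ≤ 1 ∧ 1 ≤ ‖z‖ ^ j * (‖h‖ + ‖z‖ ^ m) := by
  have hn : ‖z‖ ^ j * ‖h - z ^ m‖ = 1 := by rw [← norm_pow, ← norm_mul, hz, norm_one]
  constructor
  · calc ‖z‖ ^ j * |‖h‖ - ‖z‖ ^ m| ≤ ‖z‖ ^ j * ‖h - z ^ m‖ := by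
          gcongr; simpa only [norm_pow] using abs_norm_sub_norm_le h (z ^ m)
      _ = 1 := hn
  · calc 1 = ‖z‖ ^ j * ‖h - z ^ m‖ := hn.symm
      _ ≤ ‖z‖ ^ j * (‖h‖ + ‖z‖ ^ m) := by
          gcongr; simpa only [norm_pow] using norm_sub_le h (z ^ m)

theorem norm_ne_one_of_pow_mul_sub_eq_one (hh : 2 < ‖h‖) (hz : z ^ j * (h - z ^ m) = 1) :
    ‖z‖ ≠ 1 := by
  intro hz1
  have := (norm_pow_mul_abs_sub_le_one_le_norm_pow_mul_add hz).1
  rw [hz1, one_pow, one_pow, one_mul, abs_le] at this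
  linarith

theorem norm_lt_one_iff_of_pow_mul_sub_eq_one (hj : j ≠ 0) (hh : 2 < ‖h‖)
    (hz : z ^ j * (h - z ^ m) = 1) :
    ‖z‖ < 1 ↔ 2 / (3 * ‖h‖) < ‖z‖ ^ j ∧ ‖z‖ ^ j < 2 / ‖h‖ := by
  obtain ⟨hup, hlow⟩ := norm_pow_mul_abs_sub_le_one_le_norm_pow_mul_add hz
  constructor
  · intro hz1
    have hb : ‖z‖ ^ m ≤ 1 := pow_le_one₀ (norm_nonneg z) hz1.le
    have ha : 0 ≤ ‖z‖ ^ j := by positivity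
    rw [abs_of_pos (by linarith)] at hup
    have hlow' : 1 ≤ ‖z‖ ^ j * (‖h‖ + 1) := hlow.trans (by gcongr)
    rw [div_lt_iff₀ (by positivity), lt_div_iff₀ (by positivity)]
    constructor <;> nlinarith
  · rintro ⟨-, hlt⟩
    refine (pow_lt_one_iff_of_nonneg (norm_nonneg z) hj).mp (hlt.trans ?_)
    rw [div_lt_one (by linarith)]
    linarith

theorem one_lt_norm_iff_of_pow_mul_sub_eq_one (hm : m ≠ 0) (hh : 2 < ‖h‖)
    (hz : z ^ j * (h - z ^ m) = 1) :
    1 < ‖z‖ ↔ ‖h‖ / 2 < ‖z‖ ^ m ∧ ‖z‖ ^ m < 3 * ‖h‖ / 2 := by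
  have hup := (norm_pow_mul_abs_sub_le_one_le_norm_pow_mul_add hz).1
  constructor
  · intro hz1
    have ha : 1 ≤ ‖z‖ ^ j := one_le_pow₀ hz1.le
    have hb : |‖h‖ - ‖z‖ ^ m| ≤ 1 := by nlinarith [abs_nonneg (‖h‖ - ‖z‖ ^ m)]
    rw [abs_le] at hb
    constructor <;> linarith
  · rintro ⟨hlt, -⟩
    exact (one_lt_pow_iff_of_nonneg (norm_nonneg z) hm).mp (by linarith)

theorem inv_pow_mul_sub_eq_one {w : ℂ} (hw : w ≠ 0) (hroot : w ^ m * (h - w ^ j) = 1) :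
    w⁻¹ ^ j * (h - w⁻¹ ^ m) = 1 := by
  rw [inv_pow, inv_pow]
  field_simp
  linear_combination hroot

theorem exists_pow_mul_sub_eq_one_div_eq (hj : 0 < j) (hh : 3 ≤ ‖h‖) {ω : ℂ} (hω : ω ^ j = 1) :
    ∃ z : ℂ, z ^ j * (h - z ^ m) = 1 ∧ ‖z‖ ^ j ≤ 1 / 2 ∧
      z / (h⁻¹ ^ (j⁻¹ : ℂ) * (1 + z ^ (j + m)) ^ (j⁻¹ : ℂ)) = ω := by
  have hh0 : h ≠ 0 := norm_pos_iff.mp (by linarith)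
  set c := h⁻¹ ^ (j⁻¹ : ℂ)
  have hc : c ^ j = h⁻¹ := Complex.cpow_nat_inv_pow _ hj.ne'
  have hc0 : c ≠ 0 := by
    rintro hc0
    rw [hc0, zero_pow hj.ne', eq_comm, inv_eq_zero] at hc
    exact hh0 hc
  set q : ℝ := (j + m : ℕ) / j
  have hq : 1 ≤ q := by
    rw [le_div_iff₀ (by positivity), one_mul]; exact_mod_cast Nat.le_add_right j m
  have hA : ‖(ω * c) ^ (j + m)‖ = ‖h‖⁻¹ ^ q := by
    rw [norm_pow, norm_mul, Complex.norm_eq_one_of_pow_eq_one hω hj.ne', one_mul, ← norm_inv,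
      ← hc, norm_pow, ← Real.rpow_natCast ‖c‖ j, ← Real.rpow_mul (norm_nonneg c),
      ← Real.rpow_natCast]
    congr 1
    simp only [q]
    field_simp
  obtain ⟨ε, hε, hfix⟩ := exists_eq_mul_one_add_cpow hq
    (hA ▸ inv_rpow_mul_three_halves_rpow_le hh hq)
    (hA ▸ inv_rpow_mul_mul_three_halves_rpow_sub_one_lt hh hq)
  have hε0 : 1 + ε ≠ 0 := fun h0 => by
    rw [eq_neg_of_add_eq_zero_right h0, norm_neg, norm_one] at hε; norm_num at hε
  set z := ω * c * (1 + ε) ^ (j⁻¹ : ℂ)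
  have hzd : z ^ (j + m) = ε := by
    have hexp : ((j + m : ℕ) : ℂ) * (j : ℂ)⁻¹ = (q : ℂ) := by
      simp only [q]
      push_cast
      ring
    rw [mul_pow, ← Complex.cpow_nat_mul, hexp, hfix]
  have hzj : z ^ j = h⁻¹ * (1 + ε) := by
    rw [mul_pow, mul_pow, hω, hc, Complex.cpow_nat_inv_pow _ hj.ne', one_mul]
  refine ⟨z, ?_, ?_, ?_⟩
  · calc z ^ j * (h - z ^ m) = h * z ^ j - z ^ (j + m) := by ring
      _ = 1 := by rw [hzj, hzd]; field_simp; ring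
  · calc ‖z‖ ^ j = ‖h‖⁻¹ * ‖1 + ε‖ := by rw [← norm_pow, hzj, norm_mul, norm_inv]
      _ ≤ 3⁻¹ * (‖(1 : ℂ)‖ + ‖ε‖) := by
          gcongr
          exact norm_add_le _ _
      _ ≤ 1 / 2 := by rw [norm_one]; linarith
  · rw [hzd, div_eq_iff (mul_ne_zero hc0 (Complex.cpow_ne_zero_iff.mpr (Or.inl hε0)))]
    ring

theorem exists_finset_pow_mul_sub_eq_one_norm_lt_one (hj : 0 < j) (hh : 3 ≤ ‖h‖) :
    ∃ S : Finset ℂ, S.card = j ∧ ∀ z ∈ S, z ^ j * (h - z ^ m) = 1 ∧ ‖z‖ < 1 := by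
  have := fun ω (hω : ω ∈ nthRootsFinset j (1 : ℂ)) =>
    exists_pow_mul_sub_eq_one_div_eq (m := m) hj hh ((mem_nthRootsFinset hj 1).mp hω)
  choose! F hroot hnorm hleft using this
  refine ⟨(nthRootsFinset j (1 : ℂ)).image F, ?_, ?_⟩
  · rw [Finset.card_image_of_injOn, (Complex.isPrimitiveRoot_exp j hj.ne').card_nthRootsFinset]
    intro ω hω ω' hω' hF
    rw [← hleft ω hω, ← hleft ω' hω', hF]
  · simp only [Finset.mem_image]
    rintro _ ⟨ω, hω, rfl⟩
    exact ⟨hroot ω hω,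
      (pow_lt_one_iff_of_nonneg (norm_nonneg _) hj.ne').mp ((hnorm ω hω).trans_lt (by norm_num))⟩

theorem exists_finset_pow_mul_sub_eq_one_one_lt_norm (hm : 0 < m) (hh : 3 ≤ ‖h‖) :
    ∃ S : Finset ℂ, S.card = m ∧ ∀ z ∈ S, z ^ j * (h - z ^ m) = 1 ∧ 1 < ‖z‖ := by
  obtain ⟨S, hcard, hS⟩ := exists_finset_pow_mul_sub_eq_one_norm_lt_one (m := j) hm hh
  refine ⟨S.image (·⁻¹), by rw [Finset.card_image_of_injective _ inv_injective, hcard], ?_⟩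
  simp only [Finset.mem_image]
  rintro _ ⟨w, hw, rfl⟩
  obtain ⟨hroot, hnorm⟩ := hS w hw
  have hw0 : w ≠ 0 := by rintro rfl; simp [zero_pow hm.ne'] at hroot
  exact ⟨inv_pow_mul_sub_eq_one hw0 hroot, by
    rw [norm_inv]; exact (one_lt_inv₀ (norm_pos_iff.mpr hw0)).mpr hnorm⟩

theorem card_roots_filter_norm_lt_one_and_one_lt_norm (hj : 0 < j) (hm : 0 < m)
    (hh : 3 ≤ ‖h‖) :
    Multiset.card ((X ^ (j + m) - C h * X ^ j + 1 : ℂ[X]).roots.filter (‖·‖ < 1)) = j ∧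
      Multiset.card ((X ^ (j + m) - C h * X ^ j + 1 : ℂ[X]).roots.filter (1 < ‖·‖)) = m := by
  set p : ℂ[X] := X ^ (j + m) - C h * X ^ j + 1
  have hmem : ∀ z, z ∈ p.roots ↔ z ^ j * (h - z ^ m) = 1 := fun z =>
    mem_roots_X_pow_add_sub_C_mul_X_pow_add_one hj hm
  have hsum : Multiset.card (p.roots.filter (‖·‖ < 1)) +
      Multiset.card (p.roots.filter (1 < ‖·‖)) = j + m := by
    rw [← card_roots_X_pow_add_sub_C_mul_X_pow_add_one (h := h) hj hm, ← Multiset.card_add]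
    conv_rhs => rw [← Multiset.filter_add_not (‖·‖ < 1) p.roots]
    congr 2
    refine Multiset.filter_congr fun z hz => ?_
    rw [not_lt, (norm_ne_one_of_pow_mul_sub_eq_one (by linarith) ((hmem z).mp hz)).symm.le_iff_lt]
  obtain ⟨S, hScard, hS⟩ := exists_finset_pow_mul_sub_eq_one_norm_lt_one (m := m) hj hh
  obtain ⟨T, hTcard, hT⟩ := exists_finset_pow_mul_sub_eq_one_one_lt_norm (j := j) hm hh
  have hSle := Finset.card_le_card_filter_of_forall (s := p.roots) (P := (‖·‖ < 1))
    fun z hz => ⟨(hmem z).mpr (hS z hz).1, (hS z hz).2⟩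
  have hTle := Finset.card_le_card_filter_of_forall (s := p.roots) (P := (1 < ‖·‖))
    fun z hz => ⟨(hmem z).mpr (hT z hz).1, (hT z hz).2⟩
  omega

end Trinomial

open Polynomial in
/-- For integers `d > j > 0` and `|h| ≥ 3`, the polynomial
`x^d - h x^j + 1` has exactly `j` roots (with multiplicity) in the annulus
`(2/(3|h|))^{1/j} < |z| < (2/|h|)^{1/j}` and exactly `d - j` roots in the annulus
`(|h|/2)^{1/(d-j)} < |z| < (3|h|/2)^{1/(d-j)}`. -/
theorem trinomial_roots_annuli_concrete (d j : ℕ) (h : ℤ) (hj : 0 < j) (hjd : j < d)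
    (hh : 3 ≤ |h|) :
    Multiset.card ((X ^ d - C (h : ℂ) * X ^ j + 1 : Polynomial ℂ).roots.filter
        (fun z => (2 / (3 * |(h : ℝ)|)) ^ ((j : ℝ)⁻¹) < ‖z‖ ∧
          ‖z‖ < (2 / |(h : ℝ)|) ^ ((j : ℝ)⁻¹))) = j ∧
    Multiset.card ((X ^ d - C (h : ℂ) * X ^ j + 1 : Polynomial ℂ).roots.filter
        (fun z => (|(h : ℝ)| / 2) ^ (((d : ℝ) - (j : ℝ))⁻¹) < ‖z‖ ∧
          ‖z‖ < (3 * |(h : ℝ)| / 2) ^ (((d : ℝ) - (j : ℝ))⁻¹))) = d - j := by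
  obtain ⟨m, rfl⟩ := Nat.exists_eq_add_of_le hjd.le
  have hm : 0 < m := by omega
  have hH : |(h : ℝ)| = ‖(h : ℂ)‖ := (Complex.norm_intCast h).symm
  have hh' : 3 ≤ ‖(h : ℂ)‖ := by rw [← hH]; exact_mod_cast hh
  obtain ⟨hsmall, hlarge⟩ := card_roots_filter_norm_lt_one_and_one_lt_norm hj hm hh'
  rw [Nat.cast_add, add_sub_cancel_left, Nat.add_sub_cancel_left, hH]
  refine ⟨(congrArg Multiset.card (Multiset.filter_congr fun z hz => ?_)).trans hsmall,
    (congrArg Multiset.card (Multiset.filter_congr fun z hz => ?_)).trans hlarge⟩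
  · rw [Real.rpow_inv_lt_and_lt_rpow_inv_iff (by positivity) (by positivity) (norm_nonneg z) hj.ne',
      norm_lt_one_iff_of_pow_mul_sub_eq_one hj.ne' (by linarith)
        ((mem_roots_X_pow_add_sub_C_mul_X_pow_add_one hj hm).mp hz)]
  · rw [Real.rpow_inv_lt_and_lt_rpow_inv_iff (by positivity) (by positivity) (norm_nonneg z) hm.ne',
      one_lt_norm_iff_of_pow_mul_sub_eq_one hm.ne' (by linarith)
        ((mem_roots_X_pow_add_sub_C_mul_X_pow_add_one hj hm).mp hz)]
end

section
/- Fix an integer d ≥ 2 and an integer h with |h| ≥ 3, and let f_h(x) = x^d − h x^{d−1} + 1. Label the d complex roots of f_h as r_0, …, r_{d−1} with |r_0| ≥ |r_1| ≥ ⋯ ≥ |r_{d−1}|. Then |r_0|·|r_1|^{d−1} < 1 + 2.2/(|h| − 1.1). -/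
/-!
Every root `z` of `X ^ (n + 1) - h X ^ n + 1` satisfies `|z| ^ n |z - h| = 1`, so a root of modulus
`≥ 1` lies within `1` of `h`, a root of modulus `< 1` has `|z| ^ n ≤ 1 / (|h| - 1)`, and every root has
`|z| ^ n ≥ 1 / (|h| + 1)`. Since the moduli of the `n + 1` roots multiply to `1`, the lower bound on
the other `n - 1` roots gives `(|r₀| |r₁|) ^ n ≤ (|h| + 1) ^ (n - 1)`. For `|h| ≥ 3` we have
`(|h| - 1) ^ 2 ≥ |h| + 1`, which rules out two roots of modulus `≥ 1`, so `|r₁| < 1`, and then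
`(|r₀| |r₁| ^ n) ^ n ≤ ((|h| + 1) / (|h| - 1)) ^ (n - 1)`.
-/

/-- `r 0, …, r (d-1)` is a listing of the roots (with multiplicity) of `q`,
sorted so that the absolute values are non-increasing. -/
def SortedRoots (d : ℕ) (q : Polynomial ℂ) (r : ℕ → ℂ) : Prop :=
  q.roots = (Multiset.range d).map r ∧
    ∀ i j : ℕ, i ≤ j → j < d → ‖r j‖ ≤ ‖r i‖

open Polynomial Finset

lemma Polynomial.Monic.norm_prod_roots {K : Type*} [NormedField K] [IsAlgClosed K] {p : K[X]}
    (hp : p.Monic) : ‖p.roots.prod‖ = ‖p.coeff 0‖ := by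
  simp [(IsAlgClosed.splits p).coeff_zero_eq_prod_roots_of_monic hp]

section TrinomialRoot

variable {K : Type*} [NormedField K] {c z : K} {n : ℕ}

lemma norm_pow_mul_norm_sub_eq_one (hz : (X ^ (n + 1) - C c * X ^ n + 1).IsRoot z) :
    ‖z‖ ^ n * ‖z - c‖ = 1 := by
  have hz' : z ^ n * (z - c) = -1 := by
    simp only [IsRoot.def, eval_add, eval_sub, eval_mul, eval_pow, eval_X, eval_C,
      eval_one] at hz
    linear_combination hz
  simpa using congrArg norm hz'

lemma one_le_mul_norm_pow (hz : ‖z‖ ^ n * ‖z - c‖ = 1) : 1 ≤ (‖c‖ + 1) * ‖z‖ ^ n := by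
  rcases le_total ‖z‖ 1 with hz1 | hz1
  · calc 1 = ‖z‖ ^ n * ‖z - c‖ := hz.symm
      _ ≤ ‖z‖ ^ n * (‖c‖ + 1) := by
        gcongr
        linarith [norm_sub_le z c]
      _ = (‖c‖ + 1) * ‖z‖ ^ n := mul_comm _ _
  · nlinarith [one_le_pow₀ (n := n) hz1, norm_nonneg c]

lemma mul_norm_pow_le_one (hz : ‖z‖ ^ n * ‖z - c‖ = 1) (hz1 : ‖z‖ ≤ 1) :
    (‖c‖ - 1) * ‖z‖ ^ n ≤ 1 := by
  calc (‖c‖ - 1) * ‖z‖ ^ n ≤ ‖z - c‖ * ‖z‖ ^ n := by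
        gcongr
        linarith [norm_sub_norm_le c z, norm_sub_rev c z]
    _ = 1 := by rw [mul_comm, hz]

lemma norm_sub_one_le (hz : ‖z‖ ^ n * ‖z - c‖ = 1) (hz1 : 1 ≤ ‖z‖) : ‖c‖ - 1 ≤ ‖z‖ := by
  have hw : ‖z - c‖ ≤ 1 := by nlinarith [one_le_pow₀ (n := n) hz1, norm_nonneg (z - c)]
  linarith [norm_sub_norm_le c z, norm_sub_rev c z]

end TrinomialRoot

lemma mul_le_pow_of_prod_eq_one {b : ℕ → ℝ} {B : ℝ} {m : ℕ} (hb : ∀ i, 0 ≤ b i)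
    (hB : ∀ i < m + 2, 1 ≤ B * b i) (hprod : ∏ i ∈ range (m + 2), b i = 1) :
    b 0 * b 1 ≤ B ^ m := by
  have hrest : 1 ≤ ∏ i ∈ range m, B * b (i + 2) := by
    simpa using prod_le_prod (fun _ _ => zero_le_one) fun i hi =>
      hB (i + 2) (by simp at hi; omega)
  rw [prod_range_succ', prod_range_succ'] at hprod
  calc b 0 * b 1 ≤ b 0 * b 1 * ∏ i ∈ range m, B * b (i + 2) :=
        le_mul_of_one_le_right (mul_nonneg (hb 0) (hb 1)) hrest
    _ = B ^ m * ((∏ i ∈ range m, b (i + 2)) * b 1 * b 0) := by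
        rw [prod_mul_distrib, prod_const, card_range]; ring
    _ = B ^ m := by rw [hprod, mul_one]

section TwoLargest

variable {H x y : ℝ} {m : ℕ}

lemma lt_one_of_pow_mul_pow_le (hH : 3 ≤ H) (hyx : y ≤ x) (hx : 1 ≤ x → H - 1 ≤ x)
    (hy : 1 ≤ y → H - 1 ≤ y) (hxy : x ^ (m + 1) * y ^ (m + 1) ≤ (H + 1) ^ m) : y < 1 := by
  by_contra! hy1
  have hsq : H + 1 ≤ (H - 1) * (H - 1) := by nlinarith
  have : (H + 1) ^ (m + 1) ≤ (H + 1) ^ m :=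
    calc (H + 1) ^ (m + 1) ≤ ((H - 1) * (H - 1)) ^ (m + 1) := by gcongr
      _ ≤ (x * y) ^ (m + 1) :=
        pow_le_pow_left₀ (by nlinarith) (mul_le_mul (hx (hy1.trans hyx)) (hy hy1)
          (by linarith) (by linarith)) _
      _ ≤ (H + 1) ^ m := by rwa [mul_pow]
  linarith [pow_lt_pow_right₀ (by linarith : 1 < H + 1) (by omega : m < m + 1)]

lemma mul_pow_lt_div (hH : 1 < H) (hy : 0 ≤ y)
    (hxy : x ^ (m + 1) * y ^ (m + 1) ≤ (H + 1) ^ m) (hy1 : (H - 1) * y ^ (m + 1) ≤ 1) :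
    x * y ^ (m + 1) < (H + 1) / (H - 1) := by
  have hH1 : 0 < H - 1 := by linarith
  have hR : 1 < (H + 1) / (H - 1) := by rw [one_lt_div hH1]; linarith
  refine lt_of_pow_lt_pow_left₀ (m + 1) (by positivity) ?_
  calc (x * y ^ (m + 1)) ^ (m + 1) = x ^ (m + 1) * y ^ (m + 1) * (y ^ (m + 1)) ^ m := by ring
    _ ≤ (H + 1) ^ m * (1 / (H - 1)) ^ m := by
        gcongr
        rwa [le_div_iff₀ hH1, mul_comm]
    _ = ((H + 1) / (H - 1)) ^ m := by rw [← mul_pow, mul_one_div]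
    _ < ((H + 1) / (H - 1)) ^ (m + 1) := pow_lt_pow_right₀ hR (by omega : m < m + 1)

end TwoLargest

lemma add_one_div_sub_one_lt {H : ℝ} (hH : 1.1 < H) :
    (H + 1) / (H - 1) < 1 + 2.2 / (H - 1.1) := by
  have h1 : 0 < H - 1 := by linarith
  have h2 : 0 < H - 1.1 := by linarith
  have h3 : 2 / (H - 1) < 2.2 / (H - 1.1) := by
    rw [div_lt_div_iff₀ h1 h2]; linarith
  calc (H + 1) / (H - 1) = 1 + 2 / (H - 1) := by field_simp; ring
    _ < 1 + 2.2 / (H - 1.1) := by linarith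

open Polynomial in
/-- For an integer `d ≥ 2` and an integer `h` with `|h| ≥ 3`, labeling
the roots `r_0, …, r_{d-1}` of `x^d - h x^{d-1} + 1` with non-increasing absolute
values, one has `|r_0| |r_1|^{d-1} < 1 + 2.2/(|h| - 1.1)`. -/
theorem trinomial_r0_r1_bound (d : ℕ) (hd : 2 ≤ d) (h : ℤ) (hh : 3 ≤ |h|) (r : ℕ → ℂ)
    (hr : SortedRoots d (X ^ d - C (h : ℂ) * X ^ (d - 1) + 1) r) :
    ‖r 0‖ * ‖r 1‖ ^ (d - 1) < 1 + 2.2 / (|(h : ℝ)| - 1.1) := by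
  obtain ⟨hroots, hsort⟩ := hr
  obtain ⟨m, rfl⟩ : ∃ m, d = m + 2 := ⟨d - 2, by omega⟩
  rw [show m + 2 - 1 = m + 1 from rfl] at hroots ⊢
  have hH : 3 ≤ ‖(h : ℂ)‖ := by rw [Complex.norm_intCast]; exact_mod_cast hh
  have hroot : ∀ i < m + 2, ‖r i‖ ^ (m + 1) * ‖r i - h‖ = 1 := fun i hi =>
    norm_pow_mul_norm_sub_eq_one <| isRoot_of_mem_roots <|
      hroots ▸ Multiset.mem_map_of_mem r (Multiset.mem_range.mpr hi)
  have hprod : ∏ i ∈ range (m + 2), ‖r i‖ ^ (m + 1) = 1 := by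
    have hmonic : (X ^ (m + 2) - C (h : ℂ) * X ^ (m + 1) + 1).Monic := by monicity!
    have := hmonic.norm_prod_roots
    rw [hroots, ← range_val, ← prod_eq_multiset_prod, norm_prod] at this
    simp [prod_pow, this]
  have h01 := mul_le_pow_of_prod_eq_one (fun _ => by positivity)
    (fun i hi => one_le_mul_norm_pow (hroot i hi)) hprod
  have hr1 : ‖r 1‖ < 1 := lt_one_of_pow_mul_pow_le hH (hsort 0 1 zero_le_one (by omega))
    (norm_sub_one_le (hroot 0 (by omega))) (norm_sub_one_le (hroot 1 (by omega))) h01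
  calc ‖r 0‖ * ‖r 1‖ ^ (m + 1) < (‖(h : ℂ)‖ + 1) / (‖(h : ℂ)‖ - 1) :=
        mul_pow_lt_div (by linarith) (norm_nonneg _) h01
          (mul_norm_pow_le_one (hroot 1 (by omega)) hr1.le)
    _ < 1 + 2.2 / (|(h : ℝ)| - 1.1) := by
        rw [← Complex.norm_intCast]; exact add_one_div_sub_one_lt (by linarith)
end

section
/- Let a_1, …, a_k, b_1, …, b_k be positive real numbers such that a_i b_j − a_j b_i > 0 for all 1 ≤ i < j ≤ k. For 1 ≤ i ≤ k let L_i(x_1, …, x_k) = a_i + a_i(x_1 + ⋯ + x_{i−1}) − b_i(x_i + ⋯ + x_k), and let P ⊆ ℝ^k be the set of points satisfying L_i(x) ≥ 0 and x_i ≥ 0 for all 1 ≤ i ≤ k. Then P is a bounded convex set with nonempty interior, and for each subset I ⊆ {1, …, k} the linear system {L_i(x) = 0 for i ∈ I, x_j = 0 for j ∈ {1, …, k} ∖ I} has a unique solution, which lies in P and is an extreme point of P; moreover, as I ranges over all 2^k subsets of {1, …, k}, these solutions are pairwise distinct and exhaust all extreme points of P. -/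
/-!
`P` is the polyhedron cut out by the `2k` affine constraints `x_i ≥ 0` and `L_i ≥ 0`, so a point
of `P` is extreme iff the constraints active at it have no other common zero, and then at least
`k` of them are active. With `T = ∑ x_t` and `U_i = x_i + ⋯ + x_k` one has
`L_i = (a_i + b_i) (c_i (1 + T) - U_i)` for `c_i = a_i / (a_i + b_i)`, and the hypothesis
`a_i b_j > a_j b_i` says that the thresholds `c_i` strictly decrease. Hence on `P`, `L_i = 0`
forces `U_i > U_{i+1}`, i.e. `x_i > 0`: at an extreme point exactly one of `x_i = 0`, `L_i = 0`
holds for every `i`. Conversely the system `L_i = 0 (i ∈ I)`, `x_j = 0 (j ∉ I)` is solved from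
the top down: `U_i / (1 + T)` must be `c_m` for the least `m ∈ I` with `m ≥ i` (or `0`), which
fixes `T` and then `x`.
-/

/-- The affine form `L_i(x) = a_i + a_i (x_1 + ⋯ + x_{i-1}) - b_i (x_i + ⋯ + x_k)`. -/
def Lab (k : ℕ) (a b : Fin k → ℝ) (i : Fin k) (x : Fin k → ℝ) : ℝ :=
  a i + a i * (∑ t ∈ Finset.Iio i, x t) - b i * (∑ t ∈ Finset.Ici i, x t)

/-- The polyhedral set `P` defined by `L_i(x) ≥ 0` and `x_i ≥ 0` for all `i`. -/
def Pab (k : ℕ) (a b : Fin k → ℝ) : Set (Fin k → ℝ) :=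
  {x | ∀ i, 0 ≤ x i ∧ 0 ≤ Lab k a b i x}

open Finset Filter Topology

section Polyhedron

variable {ι E : Type*} [AddCommGroup E] [Module ℝ E]

def polyhedron (g : ι → E →ᵃ[ℝ] ℝ) : Set E := {x | ∀ l, 0 ≤ g l x}

theorem AffineMap.apply_add_smul_sub (f : E →ᵃ[ℝ] ℝ) (p x : E) (t : ℝ) :
    f (p + t • (x - p)) = f p + t * (f x - f p) := by
  have := f.apply_lineMap p x t
  rw [AffineMap.lineMap_apply_module', AffineMap.lineMap_apply_ring'] at this
  rw [add_comm p, this]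
  ring

variable {g : ι → E →ᵃ[ℝ] ℝ}

theorem convex_polyhedron : Convex ℝ (polyhedron g) := by
  intro x hx y hy θ η hθ hη hθη l
  rw [Convex.combo_affine_apply hθη]
  exact add_nonneg (mul_nonneg hθ (hx l)) (mul_nonneg hη (hy l))

theorem mem_extremePoints_polyhedron_iff [Finite ι] {p : E} :
    p ∈ (polyhedron g).extremePoints ℝ ↔
      p ∈ polyhedron g ∧ ∀ x, (∀ l, g l p = 0 → g l x = 0) → x = p := by
  refine ⟨fun hp => ⟨hp.1, fun x hx => ?_⟩, fun ⟨hpP, huniq⟩ => ?_⟩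
  · have hnear : ∀ᶠ t in 𝓝 (0 : ℝ), p + t • (x - p) ∈ polyhedron g := by
      refine eventually_all.2 fun l => ?_
      simp only [AffineMap.apply_add_smul_sub]
      rcases (hp.1 l).eq_or_lt with hl | hl
      · filter_upwards with t
        rw [← hl, hx l hl.symm, sub_self, mul_zero, add_zero]
      · have hcont : Continuous fun t : ℝ => g l p + t * (g l x - g l p) := by fun_prop
        exact hcont.continuousAt.eventually (lt_mem_nhds (by simpa using hl)) |>.mono
          fun _ => le_of_lt
    have hnear' := (continuous_neg.tendsto' (0 : ℝ) 0 neg_zero).eventually hnear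
    obtain ⟨t, ⟨h₁, h₂⟩, ht⟩ :=
      ((hnear.and hnear').filter_mono nhdsWithin_le_nhds).and
        (self_mem_nhdsWithin : ∀ᶠ t in 𝓝[>] (0 : ℝ), t ∈ Set.Ioi 0) |>.exists
    have hseg : p ∈ openSegment ℝ (p + t • (x - p)) (p + (-t) • (x - p)) :=
      ⟨1 / 2, 1 / 2, by norm_num, by norm_num, by norm_num, by module⟩
    have := ((mem_extremePoints.1 hp).2 _ h₁ _ h₂ hseg).1
    rw [add_eq_left, smul_eq_zero, sub_eq_zero] at this
    exact this.resolve_left (ne_of_gt ht)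
  · refine mem_extremePoints.2 ⟨hpP, fun x₁ hx₁ x₂ hx₂ ⟨θ, η, hθ, hη, hθη, hp⟩ => ?_⟩
    have hvanish : ∀ l, g l p = 0 → g l x₁ = 0 ∧ g l x₂ = 0 := by
      intro l hl
      rw [← hp, Convex.combo_affine_apply hθη, smul_eq_mul, smul_eq_mul] at hl
      have := hx₁ l; have := hx₂ l
      constructor <;> nlinarith
    exact ⟨huniq x₁ fun l hl => (hvanish l hl).1, huniq x₂ fun l hl => (hvanish l hl).2⟩

theorem finrank_le_card_active [Fintype ι] [FiniteDimensional ℝ E] {p : E}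
    (hp : p ∈ (polyhedron g).extremePoints ℝ) :
    Module.finrank ℝ E ≤ #{l | g l p = 0} := by
  by_contra! hlt
  have hker : LinearMap.ker (LinearMap.pi fun l : {l // g l p = 0} => (g l).linear) ≠ ⊥ :=
    LinearMap.ker_ne_bot_of_finrank_lt
      (by rw [Module.finrank_fintype_fun_eq_card, Fintype.card_subtype]; exact hlt)
  obtain ⟨v, hv, hv0⟩ := Submodule.exists_mem_ne_zero_of_ne_bot hker
  refine hv0 ?_
  have hvp : v + p = p := (mem_extremePoints_polyhedron_iff.1 hp).2 (v + p) fun l hl => by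
    have : (g l).linear v = 0 := congrFun hv ⟨l, hl⟩
    rw [← vadd_eq_add, AffineMap.map_vadd, hl, this, vadd_eq_add, add_zero]
  simpa using hvp

theorem interior_polyhedron_nonempty [Finite ι] [TopologicalSpace E] [IsTopologicalAddGroup E]
    [ContinuousSMul ℝ E] [T2Space E] [FiniteDimensional ℝ E] {p : E} (hp : ∀ l, 0 < g l p) :
    (interior (polyhedron g)).Nonempty := by
  have hopen : IsOpen {x | ∀ l, 0 < g l x} := by
    simp only [Set.ofPred_forall]
    exact isOpen_iInter_of_finite fun l =>
      isOpen_lt continuous_const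
        (AffineMap.continuous_linear_iff.1 (g l).linear.continuous_of_finiteDimensional)
  exact ⟨p, interior_maximal (fun x hx l => (hx l).le) hopen hp⟩

end Polyhedron

section Pab

variable {k : ℕ} {a b : Fin k → ℝ}

def labAffine (k : ℕ) (a b : Fin k → ℝ) (i : Fin k) : (Fin k → ℝ) →ᵃ[ℝ] ℝ where
  toFun := Lab k a b i
  linear := a i • ∑ t ∈ Iio i, LinearMap.proj t - b i • ∑ t ∈ Ici i, LinearMap.proj t
  map_vadd' p v := by
    simp only [Lab, Pi.vadd_apply', vadd_eq_add, sum_add_distrib, LinearMap.sub_apply,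
      LinearMap.smul_apply, LinearMap.coe_sum, LinearMap.coe_proj, Finset.sum_apply, Function.eval,
      smul_eq_mul]
    ring

def pabConstraint (k : ℕ) (a b : Fin k → ℝ) : Fin k ⊕ Fin k → (Fin k → ℝ) →ᵃ[ℝ] ℝ :=
  Sum.elim (fun i => (LinearMap.proj i : (Fin k → ℝ) →ₗ[ℝ] ℝ).toAffineMap) (labAffine k a b)

theorem Pab_eq_polyhedron : Pab k a b = polyhedron (pabConstraint k a b) := by
  ext x
  simp [Pab, polyhedron, pabConstraint, labAffine, forall_and]

theorem card_active_pabConstraint (x : Fin k → ℝ) :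
    #{l | pabConstraint k a b l x = 0} = #{i | x i = 0} + #{i | Lab k a b i x = 0} := by
  simp only [card_filter, Fintype.sum_sum_type]
  rfl

noncomputable def threshold (a b : Fin k → ℝ) (i : Fin k) : ℝ := a i / (a i + b i)

def tailSum (x : Fin k → ℝ) (n : ℕ) : ℝ := ∑ t ∈ univ.filter (fun t : Fin k => n ≤ t.val), x t

section tailSum

variable (x : Fin k → ℝ)

theorem tailSum_of_le {n : ℕ} (h : k ≤ n) : tailSum x n = 0 :=
  sum_eq_zero fun t ht => absurd ((mem_filter.1 ht).2.trans_lt t.isLt) (by omega)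

theorem tailSum_zero : tailSum x 0 = ∑ t, x t := by
  simp [tailSum]

theorem tailSum_coe (i : Fin k) : tailSum x i = ∑ t ∈ Ici i, x t := by
  simp only [tailSum, ← Fin.le_def, filter_le_eq_Ici]

theorem tailSum_coe_eq_add (i : Fin k) : tailSum x i = x i + tailSum x (i + 1) := by
  rw [tailSum, tailSum, ← add_sum_erase _ _ (by simp : i ∈ _)]
  congr 2
  ext t
  simp only [mem_erase, mem_filter, mem_univ, true_and, ne_eq, ← Fin.val_ne_iff]
  omega

theorem tailSum_eq_of_step (f : ℕ → ℝ) (htop : ∀ n, k ≤ n → f n = 0)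
    (hstep : ∀ i : Fin k, tailSum x (i + 1) = f (i + 1) → tailSum x i = f i) (n : ℕ) :
    tailSum x n = f n := by
  induction h : k - n generalizing n with
  | zero => rw [tailSum_of_le x (by omega), htop n (by omega)]
  | succ d ih => exact hstep ⟨n, by omega⟩ (ih (n + 1) (by omega))

end tailSum

theorem Lab_eq_tailSum {i : Fin k} (hi : a i + b i ≠ 0) (x : Fin k → ℝ) :
    Lab k a b i x = (a i + b i) * (threshold a b i * (1 + ∑ t, x t) - tailSum x i) := by
  have hsplit : ∑ t ∈ Iio i, x t = ∑ t, x t - ∑ t ∈ Ici i, x t := by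
    rw [eq_sub_iff_add_eq, ← sum_compl_add_sum (Ici i)]
    congr 2
    ext t
    simp
  rw [Lab, threshold, tailSum_coe, hsplit]
  field_simp
  ring

theorem Lab_eq_zero_iff {i : Fin k} (hi : a i + b i ≠ 0) (x : Fin k → ℝ) :
    Lab k a b i x = 0 ↔ tailSum x i = threshold a b i * (1 + ∑ t, x t) := by
  rw [Lab_eq_tailSum hi, mul_eq_zero, or_iff_right hi, sub_eq_zero, eq_comm]

/-- The value of `tailSum x n / (1 + ∑ t, x t)` at the solution `x` for `I`. -/
noncomputable def vertexTail (a b : Fin k → ℝ) (I : Finset (Fin k)) (n : ℕ) : ℝ :=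
  if h : (I.filter fun t => n ≤ t.val).Nonempty then threshold a b ((I.filter _).min' h) else 0

noncomputable def vertex (a b : Fin k → ℝ) (I : Finset (Fin k)) (i : Fin k) : ℝ :=
  (vertexTail a b I i - vertexTail a b I (i + 1)) / (1 - vertexTail a b I 0)

section vertexTail

variable (I : Finset (Fin k))

theorem vertexTail_of_le {n : ℕ} (h : k ≤ n) : vertexTail a b I n = 0 := by
  rw [vertexTail, dif_neg]
  rintro ⟨t, ht⟩
  exact absurd ((mem_filter.1 ht).2.trans_lt t.isLt) (not_lt.2 h)

theorem vertexTail_of_mem {i : Fin k} (hi : i ∈ I) : vertexTail a b I i = threshold a b i := by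
  have hmem : i ∈ I.filter fun t => (i : ℕ) ≤ t.val := mem_filter.2 ⟨hi, le_rfl⟩
  rw [vertexTail, dif_pos ⟨i, hmem⟩]
  congr 1
  exact le_antisymm (min'_le _ _ hmem) (Fin.le_def.2 (mem_filter.1 (min'_mem _ ⟨i, hmem⟩)).2)

theorem vertexTail_of_notMem {i : Fin k} (hi : i ∉ I) :
    vertexTail a b I i = vertexTail a b I (i + 1) := by
  have hfilter : (I.filter fun t => (i : ℕ) ≤ t.val) = I.filter fun t => (i : ℕ) + 1 ≤ t.val :=
    filter_congr fun t ht =>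
      ⟨fun h => lt_of_le_of_ne h fun h' => hi (by rwa [Fin.ext h']), fun h => by omega⟩
  simp only [vertexTail, hfilter]

theorem vertex_eq_zero {j : Fin k} (hj : j ∉ I) : vertex a b I j = 0 := by
  rw [vertex, vertexTail_of_notMem I hj, sub_self, zero_div]

theorem tailSum_vertex (n : ℕ) :
    tailSum (vertex a b I) n = vertexTail a b I n / (1 - vertexTail a b I 0) := by
  refine tailSum_eq_of_step _ (fun n => vertexTail a b I n / (1 - vertexTail a b I 0))
    (fun m hm => by rw [vertexTail_of_le I hm, zero_div]) (fun i h => ?_) n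
  rw [tailSum_coe_eq_add, h, vertex]
  ring

end vertexTail

section positive

variable (ha : ∀ i, 0 < a i) (hb : ∀ i, 0 < b i)
include ha hb

theorem threshold_pos (i : Fin k) : 0 < threshold a b i :=
  div_pos (ha i) (add_pos (ha i) (hb i))

theorem threshold_lt_one (i : Fin k) : threshold a b i < 1 :=
  (div_lt_one (add_pos (ha i) (hb i))).2 (lt_add_of_pos_right _ (hb i))

theorem threshold_strictAnti (hab : ∀ i j : Fin k, i < j → 0 < a i * b j - a j * b i) :
    StrictAnti (threshold a b) := by
  intro i j hij
  have := hab i j hij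
  rw [threshold, threshold, div_lt_div_iff₀ (add_pos (ha j) (hb j)) (add_pos (ha i) (hb i))]
  nlinarith

theorem tailSum_le_of_mem_Pab {x : Fin k → ℝ} (hx : x ∈ Pab k a b) (i : Fin k) :
    tailSum x i ≤ threshold a b i * (1 + ∑ t, x t) := by
  have h := (hx i).2
  rw [Lab_eq_tailSum (add_pos (ha i) (hb i)).ne'] at h
  exact sub_nonneg.1 ((mul_nonneg_iff_of_pos_left (add_pos (ha i) (hb i))).1 h)

theorem isBounded_Pab : Bornology.IsBounded (Pab k a b) := by
  refine (Metric.isBounded_Icc (0 : Fin k → ℝ) fun _ => ∑ t, a t / b t).subset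
    fun x hx => ⟨fun i => (hx i).1, fun i => ?_⟩
  let i₀ : Fin k := ⟨0, i.pos⟩
  have h := tailSum_le_of_mem_Pab ha hb hx i₀
  rw [show ((i₀ : ℕ)) = 0 from rfl, tailSum_zero, threshold, div_mul_eq_mul_div,
    le_div_iff₀ (add_pos (ha i₀) (hb i₀))] at h
  calc x i ≤ ∑ t, x t := single_le_sum (fun t _ => (hx t).1) (mem_univ i)
    _ ≤ a i₀ / b i₀ := by rw [le_div_iff₀ (hb i₀)]; linarith
    _ ≤ ∑ t, a t / b t := single_le_sum (fun t _ => (div_pos (ha t) (hb t)).le) (mem_univ i₀)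

variable (I : Finset (Fin k))

theorem vertexTail_lt_one (n : ℕ) : vertexTail a b I n < 1 := by
  unfold vertexTail
  split_ifs
  exacts [threshold_lt_one ha hb _, one_pos]

theorem one_add_sum_vertex :
    1 + ∑ t, vertex a b I t = 1 / (1 - vertexTail a b I 0) := by
  have hne : 1 - vertexTail a b I 0 ≠ 0 := (sub_pos.2 (vertexTail_lt_one ha hb I 0)).ne'
  rw [← tailSum_zero, tailSum_vertex]
  field_simp
  ring

theorem Lab_vertex (i : Fin k) :
    Lab k a b i (vertex a b I) =
      (a i + b i) * (threshold a b i - vertexTail a b I i) / (1 - vertexTail a b I 0) := by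
  rw [Lab_eq_tailSum (add_pos (ha i) (hb i)).ne', one_add_sum_vertex ha hb, tailSum_vertex]
  ring

theorem eq_vertex_of_solves (x : Fin k → ℝ) (hL : ∀ i ∈ I, Lab k a b i x = 0)
    (hz : ∀ j ∉ I, x j = 0) : x = vertex a b I := by
  have htail : ∀ n, tailSum x n = vertexTail a b I n * (1 + ∑ t, x t) := by
    refine tailSum_eq_of_step x _ (fun n hn => by rw [vertexTail_of_le I hn, zero_mul])
      fun i h => ?_
    by_cases hi : i ∈ I
    · rw [vertexTail_of_mem I hi, ← Lab_eq_zero_iff (add_pos (ha i) (hb i)).ne']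
      exact hL i hi
    · rw [tailSum_coe_eq_add, hz i hi, zero_add, h, vertexTail_of_notMem I hi]
  have hT : 1 + ∑ t, x t = 1 / (1 - vertexTail a b I 0) := by
    have h0 := htail 0
    rw [tailSum_zero] at h0
    rw [eq_div_iff (sub_pos.2 (vertexTail_lt_one ha hb I 0)).ne']
    linear_combination h0
  funext i
  have hi := tailSum_coe_eq_add x i
  rw [htail, htail, hT] at hi
  rw [vertex, sub_div, div_eq_mul_one_div (vertexTail a b I i),
    div_eq_mul_one_div (vertexTail a b I (i + 1))]
  linarith

end positive

section ordered

variable (ha : ∀ i, 0 < a i) (hb : ∀ i, 0 < b i)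
  (hab : ∀ i j : Fin k, i < j → 0 < a i * b j - a j * b i)
include ha hb hab

theorem tailSum_succ_lt_of_mem_Pab {x : Fin k → ℝ} (hx : x ∈ Pab k a b) (i : Fin k) :
    tailSum x (i + 1) < threshold a b i * (1 + ∑ t, x t) := by
  have hT : 0 < 1 + ∑ t, x t := add_pos_of_pos_of_nonneg one_pos (sum_nonneg fun t _ => (hx t).1)
  by_cases h : (i : ℕ) + 1 < k
  · calc tailSum x (i + 1) = tailSum x (⟨i + 1, h⟩ : Fin k) := rfl
      _ ≤ threshold a b ⟨i + 1, h⟩ * (1 + ∑ t, x t) := tailSum_le_of_mem_Pab ha hb hx _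
      _ < threshold a b i * (1 + ∑ t, x t) :=
        mul_lt_mul_of_pos_right (threshold_strictAnti ha hb hab (Fin.lt_def.2 (by simp))) hT
  · rw [tailSum_of_le x (by omega)]
    exact mul_pos (threshold_pos ha hb i) hT

theorem pos_of_Lab_eq_zero {x : Fin k → ℝ} (hx : x ∈ Pab k a b) {i : Fin k}
    (hi : Lab k a b i x = 0) : 0 < x i := by
  rw [Lab_eq_zero_iff (add_pos (ha i) (hb i)).ne', tailSum_coe_eq_add] at hi
  linarith [tailSum_succ_lt_of_mem_Pab ha hb hab hx i]

variable (I : Finset (Fin k))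

theorem vertexTail_succ_lt (i : Fin k) : vertexTail a b I (i + 1) < threshold a b i := by
  unfold vertexTail
  split_ifs with h
  · exact threshold_strictAnti ha hb hab (Fin.lt_def.2 (mem_filter.1 (min'_mem _ h)).2)
  · exact threshold_pos ha hb i

theorem vertexTail_lt_threshold {i : Fin k} (hi : i ∉ I) :
    vertexTail a b I i < threshold a b i :=
  vertexTail_of_notMem I hi ▸ vertexTail_succ_lt ha hb hab I i

theorem vertexTail_le_threshold (i : Fin k) : vertexTail a b I i ≤ threshold a b i := by
  by_cases hi : i ∈ I
  · exact (vertexTail_of_mem I hi).le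
  · exact (vertexTail_lt_threshold ha hb hab I hi).le

theorem vertexTail_succ_le (i : Fin k) : vertexTail a b I (i + 1) ≤ vertexTail a b I i := by
  by_cases hi : i ∈ I
  · rw [vertexTail_of_mem I hi]
    exact (vertexTail_succ_lt ha hb hab I i).le
  · rw [vertexTail_of_notMem I hi]

theorem vertex_mem_Pab : vertex a b I ∈ Pab k a b := by
  have hden : 0 ≤ 1 - vertexTail a b I 0 := sub_nonneg.2 (vertexTail_lt_one ha hb I 0).le
  refine fun i => ⟨div_nonneg (sub_nonneg.2 (vertexTail_succ_le ha hb hab I i)) hden, ?_⟩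
  rw [Lab_vertex ha hb]
  exact div_nonneg (mul_nonneg (add_pos (ha i) (hb i)).le
    (sub_nonneg.2 (vertexTail_le_threshold ha hb hab I i))) hden

theorem Lab_vertex_eq_zero_iff {i : Fin k} : Lab k a b i (vertex a b I) = 0 ↔ i ∈ I := by
  by_cases hi : i ∈ I
  · simp only [hi, Lab_vertex ha hb, vertexTail_of_mem I hi, sub_self, mul_zero,
      zero_div]
  · simp only [hi, iff_false, Lab_vertex ha hb]
    have := vertexTail_lt_threshold ha hb hab I hi
    have := vertexTail_lt_one ha hb I 0
    exact (div_pos (mul_pos (add_pos (ha i) (hb i)) (by linarith)) (by linarith)).ne'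

theorem vertex_injective : Function.Injective (vertex a b) := by
  intro I J h
  ext i
  rw [← Lab_vertex_eq_zero_iff ha hb hab I, ← Lab_vertex_eq_zero_iff ha hb hab J, h]

theorem vertex_mem_extremePoints : vertex a b I ∈ (Pab k a b).extremePoints ℝ := by
  rw [Pab_eq_polyhedron, mem_extremePoints_polyhedron_iff, ← Pab_eq_polyhedron]
  refine ⟨vertex_mem_Pab ha hb hab I, fun x hx => eq_vertex_of_solves ha hb I x
    (fun i hi => hx (.inr i) ((Lab_vertex_eq_zero_iff ha hb hab I).2 hi))
    (fun j hj => hx (.inl j) (vertex_eq_zero I hj))⟩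

theorem eq_vertex_of_mem_extremePoints {p : Fin k → ℝ} (hp : p ∈ (Pab k a b).extremePoints ℝ) :
    p = vertex a b {i | Lab k a b i p = 0} := by
  set Z : Finset (Fin k) := {i | p i = 0}
  set A : Finset (Fin k) := {i | Lab k a b i p = 0}
  have hcard := finrank_le_card_active (Pab_eq_polyhedron (a := a) (b := b) ▸ hp)
  rw [Module.finrank_fin_fun, card_active_pabConstraint] at hcard
  have hdisj : Disjoint Z A :=
    disjoint_filter.2 fun i _ h0 hL => (pos_of_Lab_eq_zero ha hb hab hp.1 hL).ne' h0
  have hcover : Z ∪ A = univ :=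
    eq_univ_of_card _ <| le_antisymm (card_le_univ _) <| by
      rwa [card_union_of_disjoint hdisj, Fintype.card_fin]
  refine eq_vertex_of_solves ha hb A p (fun i hi => (mem_filter.1 hi).2) fun j hj => ?_
  have := hcover ▸ mem_univ j
  simp only [Z, A, mem_union, mem_filter, mem_univ, true_and] at this hj
  exact this.resolve_right hj

end ordered

theorem interior_Pab_nonempty (ha : ∀ i, 0 < a i) : (interior (Pab k a b)).Nonempty := by
  have hnear : ∀ᶠ ε in 𝓝 (0 : ℝ), ∀ i, 0 < Lab k a b i fun _ => ε := by
    refine eventually_all.2 fun i => ?_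
    have hcont : Continuous fun ε : ℝ => Lab k a b i fun _ => ε := by
      unfold Lab
      fun_prop
    exact hcont.continuousAt.eventually (lt_mem_nhds (by simpa [Lab] using ha i))
  obtain ⟨ε, hε, hεpos⟩ := ((hnear.filter_mono nhdsWithin_le_nhds).and
    (self_mem_nhdsWithin : ∀ᶠ t in 𝓝[>] (0 : ℝ), t ∈ Set.Ioi 0)).exists
  rw [Pab_eq_polyhedron]
  exact interior_polyhedron_nonempty (p := fun _ => ε) (Sum.forall.2 ⟨fun _ => hεpos, hε⟩)

theorem extremePoints_Pab (ha : ∀ i, 0 < a i) (hb : ∀ i, 0 < b i)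
    (hab : ∀ i j : Fin k, i < j → 0 < a i * b j - a j * b i) :
    (Pab k a b).extremePoints ℝ = Set.range (vertex a b) :=
  (Set.range_subset_iff.2 (vertex_mem_extremePoints ha hb hab)).antisymm'
    fun _ hp => ⟨_, (eq_vertex_of_mem_extremePoints ha hb hab hp).symm⟩

end Pab

/-- Under the hypotheses `a_i, b_i > 0` and `a_i b_j - a_j b_i > 0`
for `i < j`, the set `P` is a bounded convex set with nonempty interior; for each
subset `I ⊆ {1,…,k}` the system `{L_i x = 0 (i ∈ I), x_j = 0 (j ∉ I)}` has a unique
solution, which lies in `P` and is an extreme point of `P`; these `2^k` solutions are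
pairwise distinct and are exactly the extreme points of `P`. -/
theorem Pab_polytope (k : ℕ) (a b : Fin k → ℝ)
    (ha : ∀ i, 0 < a i) (hb : ∀ i, 0 < b i)
    (hab : ∀ i j : Fin k, i < j → 0 < a i * b j - a j * b i) :
    Bornology.IsBounded (Pab k a b) ∧ Convex ℝ (Pab k a b) ∧
    (interior (Pab k a b)).Nonempty ∧
    ∃ sol : Finset (Fin k) → (Fin k → ℝ),
      (∀ I : Finset (Fin k),
        (∀ i ∈ I, Lab k a b i (sol I) = 0) ∧ (∀ j ∉ I, sol I j = 0) ∧
        (∀ x : Fin k → ℝ, (∀ i ∈ I, Lab k a b i x = 0) → (∀ j ∉ I, x j = 0) → x = sol I) ∧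
        sol I ∈ Pab k a b ∧ sol I ∈ Set.extremePoints ℝ (Pab k a b)) ∧
      Function.Injective sol ∧
      Set.extremePoints ℝ (Pab k a b) = Set.range sol :=
  ⟨isBounded_Pab ha hb, Pab_eq_polyhedron (a := a) (b := b) ▸ convex_polyhedron,
    interior_Pab_nonempty ha, vertex a b,
    fun I => ⟨fun _ => (Lab_vertex_eq_zero_iff ha hb hab I).2, fun _ => vertex_eq_zero I,
      eq_vertex_of_solves ha hb I, vertex_mem_Pab ha hb hab I,
      vertex_mem_extremePoints ha hb hab I⟩,
    vertex_injective ha hb hab, extremePoints_Pab ha hb hab⟩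
end

section
/- Let a_1, …, a_k, b_1, …, b_k be positive real numbers such that a_i b_j − a_j b_i > 0 for all 1 ≤ i < j ≤ k. For 1 ≤ i ≤ k let L_i(x_1, …, x_k) = a_i + a_i(x_1 + ⋯ + x_{i−1}) − b_i(x_i + ⋯ + x_k), and let P ⊆ ℝ^k be the set of points satisfying L_i(x) ≥ 0 and x_i ≥ 0 for all 1 ≤ i ≤ k. Then for every 1 ≤ i ≤ k there does not exist a point (c_1, …, c_k) ∈ P with L_i(c_1, …, c_k) = 0 and c_i = 0. -/
/-- Under the hypotheses `a_i, b_i > 0` and `a_i b_j - a_j b_i > 0`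
for `i < j`, for every `i` there is no point `c ∈ P` with `L_i(c) = 0` and `c_i = 0`. -/
theorem Pab_no_degenerate_point (k : ℕ) (a b : Fin k → ℝ)
    (ha : ∀ i, 0 < a i) (hb : ∀ i, 0 < b i)
    (hab : ∀ i j : Fin k, i < j → 0 < a i * b j - a j * b i) :
    ∀ i : Fin k, ¬ ∃ c ∈ Pab k a b, Lab k a b i c = 0 ∧ c i = 0 := by
  rintro i ⟨c, hc, hL, hci⟩
  have hnn : ∀ t, 0 ≤ c t := fun t => (hc t).1
  set S₁ := ∑ t ∈ Finset.Iio i, c t with hS1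
  set T := ∑ t ∈ Finset.Ici i, c t with hT
  have hS1nn : 0 ≤ S₁ := Finset.sum_nonneg fun t _ => hnn t
  have key1 : b i * T = a i * (1 + S₁) := by
    have := hL
    unfold Lab at this
    rw [← hS1, ← hT] at this
    linarith
  have hTpos : 0 < T := by
    nlinarith [ha i, hb i]
  -- there is some t > i with c t > 0
  have hIciT : T = c i + ∑ t ∈ Finset.Ioi i, c t := by
    rw [hT, ← Finset.Ioi_insert, Finset.sum_insert (Finset.notMem_Ioi_self)]
  have hIoi : 0 < ∑ t ∈ Finset.Ioi i, c t := by
    rw [hIciT, hci, zero_add] at hTpos; exact hTpos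
  have hF : ((Finset.Ioi i).filter fun t => 0 < c t).Nonempty := by
    by_contra h
    rw [Finset.not_nonempty_iff_eq_empty, Finset.filter_eq_empty_iff] at h
    have : ∑ t ∈ Finset.Ioi i, c t ≤ 0 := Finset.sum_nonpos fun t ht => by
      have := h ht; have := hnn t; linarith [not_lt.mp (h ht)]
    linarith
  set j := ((Finset.Ioi i).filter fun t => 0 < c t).min' hF with hj
  have hjmem := Finset.min'_mem _ hF
  rw [Finset.mem_filter, Finset.mem_Ioi] at hjmem
  obtain ⟨hij, hcj⟩ := hjmem
  have hmin : ∀ t, i < t → 0 < c t → j ≤ t := fun t ht hct =>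
    Finset.min'_le _ _ (Finset.mem_filter.mpr ⟨Finset.mem_Ioi.mpr ht, hct⟩)
  -- c vanishes on [i, j)
  have hzero : ∀ t : Fin k, i ≤ t → t < j → c t = 0 := by
    intro t hit htj
    rcases eq_or_lt_of_le hit with h | h
    · rw [← h]; exact hci
    · by_contra hne
      have : 0 < c t := lt_of_le_of_ne (hnn t) (Ne.symm hne)
      exact absurd (hmin t h this) (not_le.mpr htj)
  -- sum rewrites
  have hsum1 : ∑ t ∈ Finset.Iio j, c t = S₁ := by
    rw [hS1]
    exact (Finset.sum_subset (Finset.Iio_subset_Iio hij.le) (fun t ht hni => by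
      rw [Finset.mem_Iio] at ht
      rw [Finset.mem_Iio, not_lt] at hni
      exact hzero t hni ht)).symm
  have hsum2 : ∑ t ∈ Finset.Ici j, c t = T := by
    rw [hT]
    exact Finset.sum_subset (Finset.Ici_subset_Ici.mpr hij.le) (fun t ht hni => by
      rw [Finset.mem_Ici] at ht
      rw [Finset.mem_Ici, not_le] at hni
      exact hzero t ht hni)
  have key2 : b j * T ≤ a j * (1 + S₁) := by
    have := (hc j).2
    unfold Lab at this
    rw [hsum1, hsum2] at this
    linarith
  have habij := hab i j hij
  have h1S : 0 < 1 + S₁ := by linarith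
  have e1 : b j * (b i * T) = b j * (a i * (1 + S₁)) := by rw [key1]
  have e2 : b i * (b j * T) ≤ b i * (a j * (1 + S₁)) :=
    mul_le_mul_of_nonneg_left key2 (hb i).le
  have e3 : 0 < (a i * b j - a j * b i) * (1 + S₁) := mul_pos habij h1S
  nlinarith [e1, e2, e3]
end

section
/- Let d > k be positive integers and suppose (c_1, …, c_k) ∈ E_{k,d}. Then for every 1 ≤ j ≤ k, one has (d−j)/j + ((d−j)/j)·(c_1 + ⋯ + c_{j−1}) − (c_j + ⋯ + c_k) ≥ 0. -/
/-- The set `E_{k,d}`: tuples `(c_1,…,c_k)` of nonnegative reals (here `c i` plays the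
role of `c_{i+1}`) such that `|α_0| |α_1|^{c_1} ⋯ |α_k|^{c_k} ≥ 1` for every algebraic
integer `α` of degree `d`, i.e. for every sorted listing of the roots of every monic
irreducible integer polynomial of degree `d`. -/
def Ekd (k d : ℕ) : Set (Fin k → ℝ) :=
  {c | (∀ i, 0 ≤ c i) ∧
    ∀ (p : Polynomial ℤ) (r : ℕ → ℂ),
      p.Monic → Irreducible p → p.natDegree = d →
      SortedRoots d (p.map (Int.castRingHom ℂ)) r →
      1 ≤ ‖r 0‖ * ∏ i : Fin k, ‖r (i.1 + 1)‖ ^ c i}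

/-! For `1 ≤ j ≤ k` and large `m`, the polynomial `X^d - 2m X^(d-j) - 2` is Eisenstein at `2`.
Each of its roots satisfies `|z|^j ≤ 4m` and `2m |z|^(d-j) ≥ 1`, and a root with
`m |z|^(d-j) ≥ 3` even satisfies `|z|^j ≥ m`. Since the roots multiply to `2` in absolute value,
at most `j` roots can be of the latter kind once `m` is large. Hence `|α_i| ≤ (4m)^(1/j)` for all
`i`, and `|α_i| ≤ (3/m)^(1/(d-j))` for `i ≥ j`. Taking logarithms in the inequality defining
`E_{k,d}` and letting `m → ∞` gives `(1 + c_1 + ⋯ + c_{j-1}) / j ≥ (c_j + ⋯ + c_k) / (d - j)`. -/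

open Polynomial Real Filter Finset

lemma tendsto_log_natCast_atTop : Tendsto (fun m : ℕ => log m) atTop atTop :=
  tendsto_log_atTop.comp tendsto_natCast_atTop_atTop

lemma le_of_eventually_mul_log_le {a b C : ℝ}
    (h : ∀ᶠ m : ℕ in atTop, a * log m ≤ b * log m + C) : a ≤ b := by
  by_contra! hba
  obtain ⟨m, hm, hlog⟩ :=
    (h.and (tendsto_log_natCast_atTop.eventually_gt_atTop (C / (a - b)))).exists
  rw [div_lt_iff₀ (sub_pos.2 hba)] at hlog
  linarith

lemma zero_le_add_mul_of_one_le_mul_prod_rpow {k : ℕ} {a₀ U V : ℝ} {a c : Fin k → ℝ}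
    (j : Fin k) (hc : ∀ i, 0 ≤ c i) (ha₀ : 0 < a₀) (ha : ∀ i, 0 < a i)
    (h : 1 ≤ a₀ * ∏ i, a i ^ c i) (hU₀ : log a₀ ≤ U) (hU : ∀ i < j, log (a i) ≤ U)
    (hV : ∀ i, j ≤ i → log (a i) ≤ V) :
    0 ≤ (1 + ∑ i ∈ Iio j, c i) * U + (∑ i ∈ Ici j, c i) * V := by
  have hlog : 0 ≤ log a₀ + ∑ i, c i * log (a i) := by
    have hpow (i : Fin k) : 0 < a i ^ c i := rpow_pos_of_pos (ha i) _
    have := log_nonneg h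
    rwa [log_mul ha₀.ne' (prod_pos fun i _ => hpow i).ne',
      log_prod fun i _ => (hpow i).ne', sum_congr rfl fun i _ => log_rpow (ha i) (c i)] at this
  have hsplit : ∑ i, c i * log (a i)
      = ∑ i ∈ Iio j, c i * log (a i) + ∑ i ∈ Ici j, c i * log (a i) := by
    rw [← sum_filter_add_sum_filter_not univ (· < j), filter_gt_eq_Iio]
    simp only [not_lt, filter_le_eq_Ici]
  have hIio : ∑ i ∈ Iio j, c i * log (a i) ≤ (∑ i ∈ Iio j, c i) * U := by
    rw [sum_mul]
    exact sum_le_sum fun i hi => mul_le_mul_of_nonneg_left (hU i (mem_Iio.1 hi)) (hc i)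
  have hIci : ∑ i ∈ Ici j, c i * log (a i) ≤ (∑ i ∈ Ici j, c i) * V := by
    rw [sum_mul]
    exact sum_le_sum fun i hi => mul_le_mul_of_nonneg_left (hV i (mem_Ici.1 hi)) (hc i)
  linear_combination hlog + hU₀ + hIio + hIci + hsplit

lemma exists_sortedRoots (q : ℂ[X]) : ∃ r, SortedRoots q.natDegree q r := by
  set l := q.roots.toList.mergeSort fun a b => decide (‖b‖ ≤ ‖a‖)
  have hperm : l.Perm q.roots.toList := List.mergeSort_perm _ _
  have hlen : l.length = q.natDegree := by
    rw [hperm.length_eq, Multiset.length_toList, IsAlgClosed.card_roots_eq_natDegree]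
  have hsorted : l.Pairwise fun a b => ‖b‖ ≤ ‖a‖ := by
    simpa using List.pairwise_mergeSort (le := fun a b : ℂ => decide (‖b‖ ≤ ‖a‖))
      (by simp only [decide_eq_true_eq]; intro a b c hab hbc; exact hbc.trans hab)
      (by simp [le_total]) q.roots.toList
  refine ⟨fun i => l.getD i 0, ?_, fun i j hij hj => ?_⟩
  · have hl : (List.range l.length).map (fun i => l.getD i 0) = l :=
      List.ext_getElem (by simp) fun i _ hi => by simp [hi]
    rw [← hlen, Multiset.range, Multiset.map_coe, hl, Multiset.coe_eq_coe.2 hperm,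
      Multiset.coe_toList]
  · rw [← hlen] at hj
    simp only [List.getD_eq_getElem _ _ hj, List.getD_eq_getElem _ _ (hij.trans_lt hj)]
    rcases hij.lt_or_eq with hij | rfl
    · exact List.pairwise_iff_getElem.1 hsorted i j _ hj hij
    · exact le_rfl

lemma SortedRoots.isRoot {d : ℕ} {q : ℂ[X]} {r : ℕ → ℂ} (hr : SortedRoots d q r) {n : ℕ}
    (hn : n < d) : q.IsRoot (r n) :=
  isRoot_of_mem_roots (hr.1 ▸ Multiset.mem_map_of_mem r (Multiset.mem_range.2 hn))

lemma SortedRoots.prod_norm {d : ℕ} {q : ℂ[X]} {r : ℕ → ℂ} (hr : SortedRoots d q r)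
    (hq : q.Monic) : ∏ i ∈ range d, ‖r i‖ = ‖q.coeff 0‖ := by
  rw [(IsAlgClosed.splits q).coeff_zero_eq_prod_roots_of_monic hq, norm_mul, norm_pow,
    norm_neg, norm_one, one_pow, one_mul, hr.1, ← norm_prod, prod_eq_multiset_prod, range_val]

noncomputable def eisTrinomial (J e m : ℕ) : ℤ[X] := X ^ (J + e) - C (2 * m : ℤ) * X ^ e - C 2

section eisTrinomial

variable {J e m : ℕ}

lemma eisTrinomial_natDegree (hJ : 0 < J) : (eisTrinomial J e m).natDegree = J + e := by
  unfold eisTrinomial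
  compute_degree!
  simp [hJ.ne', Int.subNatNat]

lemma eisTrinomial_monic (hJ : 0 < J) : (eisTrinomial J e m).Monic := by
  unfold eisTrinomial
  monicity!
  simp [hJ.ne', Int.subNatNat]

lemma eisTrinomial_coeff_zero (he : 0 < e) : (eisTrinomial J e m).coeff 0 = -2 := by
  simp [eisTrinomial, coeff_X_pow, he.ne, (by omega : J + e ≠ 0).symm]

lemma eisTrinomial_irreducible (hJ : 0 < J) (he : 0 < e) : Irreducible (eisTrinomial J e m) := by
  have hprime : (Ideal.span {(2 : ℤ)}).IsPrime :=
    (Ideal.span_singleton_prime two_ne_zero).2 Int.prime_two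
  refine IsEisensteinAt.irreducible ⟨?_, ?_, ?_⟩ hprime (eisTrinomial_monic hJ).isPrimitive
    (by rw [eisTrinomial_natDegree hJ]; omega)
  · rw [(eisTrinomial_monic hJ).leadingCoeff, Ideal.mem_span_singleton]
    norm_num
  · intro n hn
    rw [eisTrinomial_natDegree hJ] at hn
    simp only [eisTrinomial, coeff_sub, coeff_X_pow, coeff_C_mul, coeff_C, if_neg hn.ne,
      Ideal.mem_span_singleton]
    split_ifs <;> simp
  · rw [eisTrinomial_coeff_zero he, Ideal.span_singleton_pow, Ideal.mem_span_singleton]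
    norm_num

lemma isRoot_map_eisTrinomial_iff {z : ℂ} :
    ((eisTrinomial J e m).map (Int.castRingHom ℂ)).IsRoot z ↔ z ^ (J + e) = 2 * m * z ^ e + 2 := by
  simp [eisTrinomial, sub_eq_zero, sub_sub]

end eisTrinomial

section TrinomialRoot

variable {J e m : ℕ} {z : ℂ}

lemma ne_zero_of_trinomial_root (he : 0 < e) (hz : z ^ (J + e) = 2 * m * z ^ e + 2) : z ≠ 0 := by
  rintro rfl
  simp [zero_pow (by omega : J + e ≠ 0), zero_pow he.ne'] at hz

lemma norm_pow_le_of_trinomial_root (hm : 1 ≤ m) (hz : z ^ (J + e) = 2 * m * z ^ e + 2) :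
    ‖z‖ ^ J ≤ 4 * m := by
  have h : ‖z‖ ^ J * ‖z‖ ^ e ≤ 2 * m * ‖z‖ ^ e + 2 := by
    calc ‖z‖ ^ J * ‖z‖ ^ e = ‖2 * m * z ^ e + 2‖ := by rw [← hz, norm_pow, pow_add]
      _ ≤ ‖2 * m * z ^ e‖ + ‖(2 : ℂ)‖ := norm_add_le _ _
      _ = 2 * m * ‖z‖ ^ e + 2 := by simp
  have hm' : (1 : ℝ) ≤ m := by exact_mod_cast hm
  rcases le_or_gt ‖z‖ 1 with hz1 | hz1
  · linarith [pow_le_one₀ (norm_nonneg z) hz1 (n := J)]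
  · have he : 1 ≤ ‖z‖ ^ e := one_le_pow₀ hz1.le
    nlinarith

lemma one_le_mul_norm_pow_of_trinomial_root (hm : 1 ≤ m)
    (hz : z ^ (J + e) = 2 * m * z ^ e + 2) : 1 ≤ 2 * m * ‖z‖ ^ e := by
  have h : 2 ≤ ‖z‖ ^ J * ‖z‖ ^ e + 2 * m * ‖z‖ ^ e := by
    calc (2 : ℝ) = ‖z ^ (J + e) - 2 * m * z ^ e‖ := by simp [hz]
      _ ≤ ‖z ^ (J + e)‖ + ‖2 * m * z ^ e‖ := norm_sub_le _ _
      _ = ‖z‖ ^ J * ‖z‖ ^ e + 2 * m * ‖z‖ ^ e := by simp [pow_add]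
  have hm' : (1 : ℝ) ≤ m := by exact_mod_cast hm
  rcases le_or_gt 1 ‖z‖ with hz1 | hz1
  · nlinarith [one_le_pow₀ hz1 (n := e)]
  · nlinarith [pow_le_one₀ (norm_nonneg z) hz1.le (n := J), pow_nonneg (norm_nonneg z) e]

lemma le_norm_pow_of_trinomial_root (hz : z ^ (J + e) = 2 * m * z ^ e + 2)
    (h : 3 ≤ m * ‖z‖ ^ e) : (m : ℝ) ≤ ‖z‖ ^ J := by
  have hprod : ‖z‖ ^ e * ‖2 * m - z ^ J‖ = 2 := by
    have : z ^ e * (2 * m - z ^ J) = -2 := by linear_combination -hz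
    simpa using congrArg norm this
  have hle : 2 * m - ‖z‖ ^ J ≤ ‖2 * m - z ^ J‖ := by
    simpa using norm_sub_norm_le (2 * (m : ℂ)) (z ^ J)
  nlinarith [pow_nonneg (norm_nonneg z) e]

end TrinomialRoot

lemma mul_le_of_sum_range_eq {J e : ℕ} {L : ℕ → ℝ} {B : ℝ} (he : 0 < e)
    (hsum : ∑ i ∈ range (J + e), L i = log 2)
    (hlarge : ∀ i ≤ J, B ≤ J * L i) (hall : ∀ i < J + e, -(log 2 + B) ≤ e * L i) :
    (J + e) * B ≤ (2 * e - 1) * J * log 2 := by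
  have hlow : ((J + 1 : ℕ) : ℝ) * (e * B) ≤ ∑ i ∈ range (J + 1), J * e * L i := by
    have := card_nsmul_le_sum (range (J + 1)) (fun i => (J : ℝ) * e * L i) (e * B) fun i hi => by
      have := mul_le_mul_of_nonneg_left (hlarge i (Nat.lt_succ_iff.1 (mem_range.1 hi)))
        e.cast_nonneg
      linarith
    rwa [card_range, nsmul_eq_mul] at this
  have hhigh : ((e - 1 : ℕ) : ℝ) * (J * -(log 2 + B)) ≤ ∑ i ∈ Ico (J + 1) (J + e), J * e * L i := by
    have := card_nsmul_le_sum (Ico (J + 1) (J + e)) (fun i => (J : ℝ) * e * L i) (J * -(log 2 + B))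
      fun i hi => by
        have := mul_le_mul_of_nonneg_left (hall i (mem_Ico.1 hi).2) J.cast_nonneg
        linarith
    rwa [Nat.card_Ico, (by omega : J + e - (J + 1) = e - 1), nsmul_eq_mul] at this
  have hsplit := sum_range_add_sum_Ico (fun i => (J : ℝ) * e * L i) (by omega : J + 1 ≤ J + e)
  have htotal : ∑ i ∈ range (J + e), (J : ℝ) * e * L i = J * e * log 2 := by
    rw [← mul_sum, hsum]
  rw [Nat.cast_sub he, Nat.cast_one] at hhigh
  push_cast at hlow
  linear_combination hlow + hhigh + hsplit + htotal

section SortedTrinomialRoots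

variable {J e : ℕ}

lemma eventually_mul_norm_pow_lt_three (hJ : 0 < J) (he : 0 < e) :
    ∀ᶠ m : ℕ in atTop, ∀ r,
      SortedRoots (J + e) ((eisTrinomial J e m).map (Int.castRingHom ℂ)) r →
      m * ‖r J‖ ^ e < 3 := by
  filter_upwards [eventually_ge_atTop 1,
    tendsto_log_natCast_atTop.eventually_gt_atTop ((2 * e - 1) * J * log 2 / (J + e))]
    with m hm hlog r hr
  have hroot (n : ℕ) (hn : n < J + e) := isRoot_map_eisTrinomial_iff.1 (hr.isRoot hn)
  have hpos (n : ℕ) (hn : n < J + e) : 0 < ‖r n‖ :=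
    norm_pos_iff.2 (ne_zero_of_trinomial_root he (hroot n hn))
  by_contra! hlarge
  have hsum : ∑ i ∈ range (J + e), log ‖r i‖ = log 2 := by
    rw [← log_prod fun i hi => (hpos i (mem_range.1 hi)).ne',
      hr.prod_norm ((eisTrinomial_monic hJ).map _), coeff_map, eisTrinomial_coeff_zero he]
    norm_num
  have hbig (i : ℕ) (hi : i ≤ J) : log m ≤ J * log ‖r i‖ := by
    have h3 : 3 ≤ m * ‖r i‖ ^ e :=
      hlarge.trans (by gcongr; exact hr.2 i J hi (by omega))
    rw [← log_pow]
    exact log_le_log (by exact_mod_cast hm) (le_norm_pow_of_trinomial_root (hroot i (by omega)) h3)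
  have hall (i : ℕ) (hi : i < J + e) : -(log 2 + log m) ≤ e * log ‖r i‖ := by
    have := log_nonneg (one_le_mul_norm_pow_of_trinomial_root hm (hroot i hi))
    rw [log_mul (by positivity) (pow_pos (hpos i hi) e).ne', log_mul two_ne_zero
      (by positivity), log_pow] at this
    linarith
  have := mul_le_of_sum_range_eq he hsum hbig hall
  rw [div_lt_iff₀ (by positivity)] at hlog
  linarith

lemma eventually_log_norm_le (hJ : 0 < J) (he : 0 < e) :
    ∀ᶠ m : ℕ in atTop, ∀ r,
      SortedRoots (J + e) ((eisTrinomial J e m).map (Int.castRingHom ℂ)) r →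
      (∀ n < J + e, 0 < ‖r n‖ ∧ log ‖r n‖ ≤ (log 4 + log m) / J) ∧
        ∀ n, J ≤ n → n < J + e → log ‖r n‖ ≤ (log 3 - log m) / e := by
  filter_upwards [eventually_ge_atTop 1, eventually_mul_norm_pow_lt_three hJ he]
    with m hm hsmall r hr
  have hroot (n : ℕ) (hn : n < J + e) := isRoot_map_eisTrinomial_iff.1 (hr.isRoot hn)
  have hpos (n : ℕ) (hn : n < J + e) : 0 < ‖r n‖ :=
    norm_pos_iff.2 (ne_zero_of_trinomial_root he (hroot n hn))
  have hm0 : (0 : ℝ) < m := by exact_mod_cast hm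
  refine ⟨fun n hn => ⟨hpos n hn, ?_⟩, fun n hJn hn => ?_⟩
  · rw [le_div_iff₀ (by exact_mod_cast hJ), mul_comm, ← log_pow, ← log_mul four_ne_zero hm0.ne']
    exact log_le_log (pow_pos (hpos n hn) J) (norm_pow_le_of_trinomial_root hm (hroot n hn))
  · have hlt : m * ‖r n‖ ^ e < 3 :=
      (mul_le_mul_of_nonneg_left (pow_le_pow_left₀ (hpos n hn).le (hr.2 J n hJn hn) e)
        hm0.le).trans_lt (hsmall r hr)
    rw [le_div_iff₀ (by exact_mod_cast he), mul_comm, ← log_pow, ← log_div three_ne_zero hm0.ne']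
    exact log_le_log (pow_pos (hpos n hn) e) (by rw [le_div_iff₀ hm0]; linarith)

end SortedTrinomialRoots

lemma sum_Ici_div_le_of_mem_Ekd {k d : ℕ} (hkd : k < d) {c : Fin k → ℝ} (hc : c ∈ Ekd k d)
    (j : Fin k) :
    (∑ i ∈ Ici j, c i) / ((d : ℝ) - ((j : ℕ) + 1)) ≤ (1 + ∑ i ∈ Iio j, c i) / ((j : ℕ) + 1) := by
  obtain ⟨e, rfl⟩ : ∃ e, d = (j : ℕ) + 1 + e := ⟨d - (j + 1), by omega⟩
  have he : 0 < e := by omega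
  have hJ : 0 < (j : ℕ) + 1 := Nat.succ_pos j
  apply le_of_eventually_mul_log_le (C := (1 + ∑ i ∈ Iio j, c i) / ((j : ℕ) + 1) * log 4
    + (∑ i ∈ Ici j, c i) / e * log 3)
  filter_upwards [eventually_log_norm_le hJ he] with m hbound
  obtain ⟨r, hr⟩ := exists_sortedRoots ((eisTrinomial ((j : ℕ) + 1) e m).map (Int.castRingHom ℂ))
  rw [(eisTrinomial_monic hJ).natDegree_map, eisTrinomial_natDegree hJ] at hr
  obtain ⟨hall, hsmall⟩ := hbound r hr
  have hprod := hc.2 _ r (eisTrinomial_monic hJ) (eisTrinomial_irreducible hJ he)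
    (eisTrinomial_natDegree hJ) hr
  have := zero_le_add_mul_of_one_le_mul_prod_rpow j hc.1 (hall 0 (by omega)).1
    (fun i => (hall _ (by omega)).1) hprod (hall 0 (by omega)).2
    (fun i _ => (hall _ (by omega)).2) (fun i hi => hsmall _ (by rw [Fin.le_def] at hi; omega)
      (by omega))
  push_cast at this ⊢
  linear_combination this

theorem Ekd_linear_inequalities_general (k d : ℕ) (hkd : k < d)
    (c : Fin k → ℝ) (hc : c ∈ Ekd k d) :
    ∀ j : Fin k,
      0 ≤ ((d : ℝ) - (((j : ℕ) : ℝ) + 1)) / (((j : ℕ) : ℝ) + 1)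
          + ((d : ℝ) - (((j : ℕ) : ℝ) + 1)) / (((j : ℕ) : ℝ) + 1)
            * (∑ i ∈ Finset.Iio j, c i)
          - ∑ i ∈ Finset.Ici j, c i := by
  intro j
  have hJ : (0 : ℝ) < (j : ℕ) + 1 := by positivity
  have he : (0 : ℝ) < d - ((j : ℕ) + 1) := by
    rw [sub_pos]
    exact_mod_cast (by omega : (j : ℕ) + 1 < d)
  have h := sum_Ici_div_le_of_mem_Ekd hkd hc j
  rw [div_le_div_iff₀ he hJ] at h
  field_simp
  linarith

/-- If `(c_1,…,c_k) ∈ E_{k,d}` (with `d > k ≥ 1`), then for every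
`1 ≤ j ≤ k` (written as `j : Fin k` representing the index `j+1`) we have
`(d-j)/j + ((d-j)/j)(c_1 + ⋯ + c_{j-1}) - (c_j + ⋯ + c_k) ≥ 0`. -/
theorem Ekd_linear_inequalities (k d : ℕ) (hk : 0 < k) (hkd : k < d)
    (c : Fin k → ℝ) (hc : c ∈ Ekd k d) :
    ∀ j : Fin k,
      0 ≤ ((d : ℝ) - (((j : ℕ) : ℝ) + 1)) / (((j : ℕ) : ℝ) + 1)
          + ((d : ℝ) - (((j : ℕ) : ℝ) + 1)) / (((j : ℕ) : ℝ) + 1)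
            * (∑ i ∈ Finset.Iio j, c i)
          - ∑ i ∈ Finset.Ici j, c i :=
  Ekd_linear_inequalities_general k d hkd c hc
end

section
/- Let d > k be positive integers. Then P_{k,d} is a bounded convex subset of ℝ^k equal to the convex hull of the 2^k points {v_J : J ⊆ {1, …, k}}, these points are pairwise distinct, and the set of extreme points of P_{k,d} is exactly {v_J : J ⊆ {1, …, k}}. -/
open Classical in
/-- The point `v_J` attached to a subset `J ⊆ {1,…,k}` (coordinates are 1-indexed:
the coordinate `i : Fin k` of the tuple represents coordinate `i+1`).  If `j ∈ J` is
not the largest element of `J`, then `v_j = (next(j) - j)/min J` where `next(j)` is the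
smallest element of `J` exceeding `j`; if `j = max J` then `v_j = (d - j)/min J`;
and `v_j = 0` for `j ∉ J`. -/
noncomputable def vJ (d k : ℕ) (J : Finset ℕ) : Fin k → ℝ := fun i =>
  if (i : ℕ) + 1 ∈ J then
    ((if ∃ m ∈ J, (i : ℕ) + 1 < m then ((sInf {m : ℕ | m ∈ J ∧ (i : ℕ) + 1 < m} : ℕ) : ℝ)
      else (d : ℝ)) - ((i : ℕ) + 1)) / ((sInf {m : ℕ | m ∈ J} : ℕ) : ℝ)
  else 0

/-- The polytope `P_{k,d}`: points with nonnegative coordinates satisfying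
`(d-j)/j + ((d-j)/j)(x_1 + ⋯ + x_{j-1}) - (x_j + ⋯ + x_k) ≥ 0` for `1 ≤ j ≤ k`
(the index `j : Fin k` represents `j+1`). -/
def Pkd (k d : ℕ) : Set (Fin k → ℝ) :=
  {x | (∀ i, 0 ≤ x i) ∧ ∀ j : Fin k,
    0 ≤ ((d : ℝ) - (((j : ℕ) : ℝ) + 1)) / (((j : ℕ) : ℝ) + 1)
        + ((d : ℝ) - (((j : ℕ) : ℝ) + 1)) / (((j : ℕ) : ℝ) + 1)
          * (∑ i ∈ Finset.Iio j, x i)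
        - ∑ i ∈ Finset.Ici j, x i}

/-!
Write `S_m x = x_1 + ⋯ + x_m`. After multiplying by `j`, the `j`-th inequality reads
`j (1 + S_k x) ≤ d (1 + S_{j-1} x)`, so `P_{k,d}` is a polyhedron cut out by `2k` affine
constraints, and a point of it is extreme iff no nonzero direction keeps all of its tight
constraints tight. For `J ≠ ∅` one has `1 + S_m v_J = next_J(m) / min J`, where `next_J(m)` is
the least element of `J` above `m` (or `d`). Hence the constraints tight at `v_J` are `x_j = 0`
for `j ∉ J` and the inequalities with index `j ∈ J`, and a downward induction on `m` shows that
they force `x = v_J`. Conversely, let `x` be extreme and `J` its support. If the inequality of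
some `j ∈ J` were slack, then `e_p - e_j`, with `p` the previous element of `J`, or `x + e_j` if
`j = min J`, would be a direction keeping every tight constraint tight. So the extreme points are
exactly the `v_J`, `J` is read off as the support of `v_J`, and Krein–Milman on the compact set
`P_{k,d}` gives `P_{k,d} = conv {v_J}`.
-/

open Finset Filter Topology

section Polyhedron

variable {ι E : Type*} [AddCommGroup E] [Module ℝ E]

theorem mem_extremePoints_of_forall_tight_eq (f : ι → E →ᵃ[ℝ] ℝ) {x : E}
    (hx : ∀ i, 0 ≤ f i x)
    (h : ∀ y, (∀ i, 0 ≤ f i y) → (∀ i, f i x = 0 → f i y = 0) → y = x) :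
    x ∈ {y | ∀ i, 0 ≤ f i y}.extremePoints ℝ := by
  refine mem_extremePoints.2 ⟨hx, fun y₁ hy₁ y₂ hy₂ ⟨a, b, ha, hb, hab, hxy⟩ => ?_⟩
  have htight (i) (hi : f i x = 0) : f i y₁ = 0 ∧ f i y₂ = 0 := by
    have hcombo := Convex.combo_affine_apply hab (f := f i) (x := y₁) (y := y₂)
    rw [hxy, hi, smul_eq_mul, smul_eq_mul] at hcombo
    have := hy₁ i
    have := hy₂ i
    constructor <;> nlinarith
  exact ⟨h y₁ hy₁ fun i hi => (htight i hi).1, h y₂ hy₂ fun i hi => (htight i hi).2⟩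

/-- `x ± t • u` stays in the polyhedron for small `t`. -/
theorem notMem_extremePoints_of_forall_tight [Finite ι] (f : ι → E →ᵃ[ℝ] ℝ) {x u : E}
    (hu : u ≠ 0) (h : ∀ i, f i x = 0 → (f i).linear u = 0) :
    x ∉ {y | ∀ i, 0 ≤ f i y}.extremePoints ℝ := by
  intro hx
  have hline (i) (t : ℝ) : f i (x + t • u) = f i x + t * (f i).linear u := by
    rw [add_comm x, ← vadd_eq_add, AffineMap.map_vadd, vadd_eq_add, map_smul, smul_eq_mul,
      add_comm]
  have hnear : ∀ᶠ t in 𝓝 (0 : ℝ), ∀ i, 0 ≤ f i (x + t • u) := by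
    refine eventually_all.2 fun i => ?_
    rcases (hx.1 i).eq_or_lt with h0 | hpos
    · exact .of_forall fun t => by rw [hline, ← h0, h i h0.symm, mul_zero, add_zero]
    · have hcont : Tendsto (fun t : ℝ => f i x + t * (f i).linear u) (𝓝 0) (𝓝 (f i x)) :=
        Continuous.tendsto' (by fun_prop) _ _ (by simp)
      exact (hcont.eventually (lt_mem_nhds hpos)).mono fun t ht => by rw [hline]; exact ht.le
  have hneg : Tendsto (Neg.neg : ℝ → ℝ) (𝓝 0) (𝓝 0) := by simpa using tendsto_neg (0 : ℝ)
  have hsymm : ∀ᶠ t in 𝓝 (0 : ℝ), (∀ i, 0 ≤ f i (x + t • u)) ∧ ∀ i, 0 ≤ f i (x + (-t) • u) :=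
    hnear.and (hneg.eventually hnear)
  obtain ⟨t, ⟨hplus, hminus⟩, ht⟩ :=
    ((hsymm.filter_mono nhdsWithin_le_nhds).and (self_mem_nhdsWithin (s := Set.Ioi 0))).exists
  have hseg : x ∈ openSegment ℝ (x + t • u) (x + (-t) • u) :=
    ⟨1 / 2, 1 / 2, by norm_num, by norm_num, by norm_num, by module⟩
  obtain ⟨hfixed, -⟩ := (mem_extremePoints.1 hx).2 _ hplus _ hminus hseg
  exact hu ((smul_eq_zero.1 (add_eq_left.1 hfixed)).resolve_left ht.ne')

end Polyhedron

namespace Pkd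

variable {k d : ℕ}

/-- In the paper's 1-based indexing, `partialSum k m x = x_1 + ⋯ + x_m`. -/
def partialSum (k m : ℕ) : (Fin k → ℝ) →ₗ[ℝ] ℝ :=
  ∑ n ∈ range m, if h : n < k then LinearMap.proj ⟨n, h⟩ else 0

theorem partialSum_apply (m : ℕ) (x : Fin k → ℝ) :
    partialSum k m x = ∑ n ∈ range m, if h : n < k then x ⟨n, h⟩ else 0 := by
  simp only [partialSum, LinearMap.coe_sum, Finset.sum_apply]
  exact sum_congr rfl fun n _ => by split_ifs <;> rfl

theorem partialSum_succ (x : Fin k → ℝ) (i : Fin k) :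
    partialSum k (i + 1) x = partialSum k i x + x i := by
  rw [partialSum_apply, sum_range_succ, ← partialSum_apply, dif_pos i.isLt]

theorem partialSum_self (x : Fin k → ℝ) : partialSum k k x = ∑ i, x i := by
  rw [partialSum_apply, ← Fin.sum_univ_eq_sum_range (fun n => if h : n < k then x ⟨n, h⟩ else 0)]
  exact sum_congr rfl fun i _ => dif_pos i.isLt

theorem sum_Iio_eq_partialSum (x : Fin k → ℝ) (j : Fin k) :
    ∑ i ∈ Iio j, x i = partialSum k j x := by
  rw [partialSum_apply, ← Nat.Iio_eq_range, ← Fin.map_valEmbedding_Iio, sum_map]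
  exact sum_congr rfl fun i _ => by simp

theorem partialSum_eq_of_forall_eq_zero {x : Fin k → ℝ} {m n : ℕ} (hmn : m ≤ n)
    (h : ∀ i : Fin k, m ≤ i → (i : ℕ) < n → x i = 0) : partialSum k n x = partialSum k m x := by
  rw [partialSum_apply, partialSum_apply, ← sum_range_add_sum_Ico _ hmn, add_eq_left]
  refine sum_eq_zero fun i hi => ?_
  rw [mem_Ico] at hi
  split_ifs with hik
  exacts [h ⟨i, hik⟩ hi.1 hi.2, rfl]

theorem partialSum_single (i : Fin k) (c : ℝ) (m : ℕ) :
    partialSum k m (Pi.single i c) = if (i : ℕ) < m then c else 0 := by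
  calc partialSum k m (Pi.single i c) = ∑ n ∈ range m, if n = (i : ℕ) then c else 0 := by
        refine (partialSum_apply _ _).trans (sum_congr rfl fun n _ => ?_)
        split_ifs <;> simp_all [Fin.ext_iff]
    _ = if (i : ℕ) < m then c else 0 := by simp

variable (k d) in
/-- The constraints defining `P_{k,d}`: `inl i` is `x_{i+1} ≥ 0`, and `inr j` is the `(j+1)`-st
inequality, multiplied by `j + 1`. -/
def constraint : Fin k ⊕ Fin k → (Fin k → ℝ) →ᵃ[ℝ] ℝ
  | .inl i => (LinearMap.proj i : (Fin k → ℝ) →ₗ[ℝ] ℝ).toAffineMap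
  | .inr j => ((d : ℝ) • partialSum k j - ((j : ℝ) + 1) • partialSum k k).toAffineMap
      + AffineMap.const ℝ (Fin k → ℝ) ((d : ℝ) - ((j : ℝ) + 1))

@[simp]
theorem constraint_inl (i : Fin k) (x : Fin k → ℝ) : constraint k d (.inl i) x = x i := rfl

@[simp]
theorem constraint_inl_linear (i : Fin k) (u : Fin k → ℝ) :
    (constraint k d (.inl i)).linear u = u i := rfl

theorem constraint_inr (j : Fin k) (x : Fin k → ℝ) :
    constraint k d (.inr j) x = d * (1 + partialSum k j x) - (j + 1) * (1 + partialSum k k x) := by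
  simp only [constraint, AffineMap.coe_add, LinearMap.coe_toAffineMap, AffineMap.coe_const,
    Pi.add_apply, LinearMap.sub_apply, LinearMap.smul_apply, smul_eq_mul, Function.const_apply]
  ring

theorem constraint_inr_linear (j : Fin k) (u : Fin k → ℝ) :
    (constraint k d (.inr j)).linear u = d * partialSum k j u - (j + 1) * partialSum k k u := by
  simp [constraint]

theorem Pkd_eq_setOf_constraint : Pkd k d = {x | ∀ c, 0 ≤ constraint k d c x} := by
  ext x
  simp only [Pkd, Set.mem_ofPred_eq, Sum.forall, constraint_inl, constraint_inr]
  refine and_congr Iff.rfl (forall_congr' fun j => ?_)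
  have hj : (0 : ℝ) < (j : ℝ) + 1 := by positivity
  have hIci : ∑ i ∈ Ici j, x i = partialSum k k x - partialSum k j x := by
    rw [partialSum_self, ← sum_add_sum_compl (Iio j), sum_Iio_eq_partialSum, add_sub_cancel_left]
    congr 1
    ext i
    simp
  have hrescale (A T : ℝ) : (d - (j + 1)) / (j + 1) + (d - (j + 1)) / (j + 1) * A - (T - A)
      = (d * (1 + A) - (j + 1) * (1 + T)) / (j + 1) := by
    field_simp
    ring
  rw [sum_Iio_eq_partialSum, hIci, hrescale, le_div_iff₀ hj, zero_mul]

theorem mem_Pkd_iff {x : Fin k → ℝ} : x ∈ Pkd k d ↔ ∀ c, 0 ≤ constraint k d c x := by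
  rw [Pkd_eq_setOf_constraint, Set.mem_ofPred_eq]

open Classical in
noncomputable def next (d : ℕ) (J : Finset ℕ) (m : ℕ) : ℕ :=
  if ∃ a ∈ J, m < a then sInf {a : ℕ | a ∈ J ∧ m < a} else d

variable {J : Finset ℕ} {m : ℕ}

theorem lt_next (hmd : m < d) : m < next d J m := by
  unfold next
  split_ifs with h
  exacts [(Nat.sInf_mem h).2, hmd]

theorem next_eq_succ (h : m + 1 ∈ J) : next d J m = m + 1 := by
  have hex : ∃ a ∈ J, m < a := ⟨m + 1, h, m.lt_succ_self⟩
  have hle : sInf {a : ℕ | a ∈ J ∧ m < a} ≤ m + 1 := Nat.sInf_le ⟨h, m.lt_succ_self⟩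
  have hlt := (Nat.sInf_mem (s := {a : ℕ | a ∈ J ∧ m < a}) hex).2
  rw [next, if_pos hex]
  omega

theorem next_succ (h : m + 1 ∉ J) : next d J (m + 1) = next d J m := by
  have hiff (a : ℕ) : a ∈ J ∧ m + 1 < a ↔ a ∈ J ∧ m < a :=
    ⟨fun ha => ⟨ha.1, by omega⟩,
      fun ha => ⟨ha.1, lt_of_le_of_ne ha.2 fun hm => h (by rw [hm]; exact ha.1)⟩⟩
  simp only [next, hiff]

theorem next_eq_of_le (hJ : J ⊆ Icc 1 k) (hm : k ≤ m) : next d J m = d := by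
  refine if_neg fun ⟨a, ha, hma⟩ => ?_
  have := (mem_Icc.1 (hJ ha)).2
  omega

theorem next_zero (hJ : J ⊆ Icc 1 k) (hne : J.Nonempty) : next d J 0 = sInf {a : ℕ | a ∈ J} := by
  have hpos (a) (ha : a ∈ J) : 0 < a := (mem_Icc.1 (hJ ha)).1
  obtain ⟨a, ha⟩ := hne
  rw [next, if_pos ⟨a, ha, hpos a ha⟩]
  congr 1
  ext b
  exact ⟨And.left, fun hb => ⟨hb, hpos b hb⟩⟩

theorem vJ_apply (hJ : J ⊆ Icc 1 k) (i : Fin k) :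
    vJ d k J i = ((next d J (i + 1) : ℝ) - next d J i) / next d J 0 := by
  by_cases h : (i : ℕ) + 1 ∈ J
  · rw [vJ, if_pos h, next_eq_succ h, ← next_zero hJ ⟨_, h⟩]
    push_cast
    congr 2
    rw [next, Nat.cast_ite]
  · rw [vJ, if_neg h, next_succ h, sub_self, zero_div]

theorem vJ_of_notMem {i : Fin k} (h : (i : ℕ) + 1 ∉ J) : vJ d k J i = 0 := if_neg h

theorem vJ_pos (hJ : J ⊆ Icc 1 k) (hkd : k < d) {i : Fin k} (h : (i : ℕ) + 1 ∈ J) :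
    0 < vJ d k J i := by
  have hlt : ((i : ℕ) : ℝ) + 1 < next d J (i + 1) := by exact_mod_cast lt_next (by omega)
  have hpos : (0 : ℝ) < next d J 0 := by exact_mod_cast lt_next (by omega)
  rw [vJ_apply hJ, next_eq_succ h]
  push_cast
  exact div_pos (by linarith) hpos

theorem one_add_partialSum_vJ (hJ : J ⊆ Icc 1 k) (hkd : k < d) (hm : m ≤ k) :
    1 + partialSum k m (vJ d k J) = next d J m / next d J 0 := by
  have hpos : (0 : ℝ) < next d J 0 := by exact_mod_cast lt_next (by omega)
  have hterm : ∀ n ∈ range m, (if h : n < k then vJ d k J ⟨n, h⟩ else 0)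
      = ((next d J (n + 1) : ℝ) - next d J n) / next d J 0 := fun n hn => by
    rw [dif_pos (by rw [mem_range] at hn; omega), vJ_apply hJ]
  rw [partialSum_apply, sum_congr rfl hterm, ← sum_div,
    sum_range_sub (fun n => (next d J n : ℝ)), add_div' _ _ _ hpos.ne', one_mul, add_sub_cancel]

theorem constraint_inr_vJ (hJ : J ⊆ Icc 1 k) (hkd : k < d) (j : Fin k) :
    constraint k d (.inr j) (vJ d k J) = d * ((next d J j : ℝ) - (j + 1)) / next d J 0 := by
  rw [constraint_inr, one_add_partialSum_vJ hJ hkd j.isLt.le, one_add_partialSum_vJ hJ hkd le_rfl,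
    next_eq_of_le hJ le_rfl]
  ring

theorem constraint_vJ_nonneg (hJ : J ⊆ Icc 1 k) (hkd : k < d) : ∀ c, 0 ≤ constraint k d c (vJ d k J) := by
  rintro (i | j)
  · rw [constraint_inl]
    by_cases h : (i : ℕ) + 1 ∈ J
    exacts [(vJ_pos hJ hkd h).le, (vJ_of_notMem h).ge]
  · have hlt : ((j : ℕ) : ℝ) + 1 ≤ next d J j := by exact_mod_cast lt_next (by omega)
    rw [constraint_inr_vJ hJ hkd]
    exact div_nonneg (mul_nonneg d.cast_nonneg (by linarith)) (Nat.cast_nonneg _)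

noncomputable def supportIndex (x : Fin k → ℝ) : Finset ℕ :=
  (univ.filter fun i : Fin k => x i ≠ 0).image fun i : Fin k => (i : ℕ) + 1

theorem succ_mem_supportIndex {x : Fin k → ℝ} {i : Fin k} :
    (i : ℕ) + 1 ∈ supportIndex x ↔ x i ≠ 0 := by
  simp [supportIndex, Fin.val_inj]

theorem supportIndex_subset (x : Fin k → ℝ) : supportIndex x ⊆ Icc 1 k := by
  intro m hm
  simp only [supportIndex, mem_image] at hm
  obtain ⟨i, -, rfl⟩ := hm
  exact mem_Icc.2 ⟨by omega, i.isLt⟩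

theorem supportIndex_vJ (hJ : J ⊆ Icc 1 k) (hkd : k < d) : supportIndex (vJ d k J) = J := by
  ext m
  by_cases hm : m ∈ Icc 1 k
  · obtain ⟨i, rfl⟩ : ∃ i : Fin k, (i : ℕ) + 1 = m :=
      ⟨⟨m - 1, by grind⟩, by grind⟩
    rw [succ_mem_supportIndex]
    exact ⟨not_imp_comm.1 vJ_of_notMem, fun h => (vJ_pos hJ hkd h).ne'⟩
  · exact iff_of_false (fun h => hm (supportIndex_subset _ h)) (fun h => hm (hJ h))

theorem eq_vJ_of_tight (hJ : J ⊆ Icc 1 k) (hkd : k < d) {y : Fin k → ℝ}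
    (hsupp : ∀ i : Fin k, (i : ℕ) + 1 ∉ J → y i = 0)
    (htight : ∀ j : Fin k, (j : ℕ) + 1 ∈ J → constraint k d (.inr j) y = 0) :
    y = vJ d k J := by
  set T := 1 + partialSum k k y
  have hd : (0 : ℝ) < d := by exact_mod_cast (show 0 < d by omega)
  have hdown (m : ℕ) (hm : m ≤ k) : d * (1 + partialSum k m y) = next d J m * T := by
    induction hm using Nat.decreasingInduction with
    | self => rw [next_eq_of_le hJ le_rfl]
    | of_succ m hm ih =>
      by_cases h : m + 1 ∈ J
      · have := htight ⟨m, hm⟩ h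
        rw [constraint_inr] at this
        rw [next_eq_succ h]
        push_cast
        linarith
      · rwa [partialSum_succ y ⟨m, hm⟩, hsupp ⟨m, hm⟩ h, add_zero, next_succ h] at ih
  have hT : T = d / next d J 0 := by
    have hpos : (0 : ℝ) < next d J 0 := by exact_mod_cast lt_next (by omega)
    have := hdown 0 (Nat.zero_le _)
    rw [partialSum_apply, sum_range_zero, add_zero, mul_one] at this
    field_simp
    linarith
  have hpartial (m : ℕ) (hm : m ≤ k) : partialSum k m y = partialSum k m (vJ d k J) := by
    have hcancel : (d : ℝ) * (1 + partialSum k m y) = d * (1 + partialSum k m (vJ d k J)) := by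
      rw [hdown m hm, hT, one_add_partialSum_vJ hJ hkd hm]
      ring
    linarith [mul_left_cancel₀ hd.ne' hcancel]
  funext i
  have := partialSum_succ y i
  rw [hpartial _ i.isLt, hpartial _ i.isLt.le, partialSum_succ] at this
  linarith

theorem convex_Pkd : Convex ℝ (Pkd k d) := by
  rw [Pkd_eq_setOf_constraint, Set.ofPred_forall]
  exact convex_iInter fun c => (convex_Ici 0).affine_preimage (constraint k d c)

theorem isClosed_Pkd : IsClosed (Pkd k d) := by
  rw [Pkd_eq_setOf_constraint, Set.ofPred_forall]
  exact isClosed_iInter fun c =>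
    isClosed_le continuous_const (constraint k d c).continuous_of_finiteDimensional

theorem Pkd_subset_Icc : Pkd k d ⊆ Set.Icc 0 fun _ => (d : ℝ) := by
  intro x hx
  rw [mem_Pkd_iff] at hx
  refine ⟨fun i => hx (.inl i), fun i => ?_⟩
  have hfirst := hx (.inr ⟨0, i.pos⟩)
  rw [constraint_inr, partialSum_self] at hfirst
  have hle : x i ≤ ∑ i, x i := single_le_sum (fun i _ => hx (.inl i)) (mem_univ i)
  simp only [partialSum_apply, sum_range_zero] at hfirst
  push_cast at hfirst
  linarith

theorem isCompact_Pkd : IsCompact (Pkd k d) :=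
  Metric.isCompact_of_isClosed_isBounded isClosed_Pkd
    ((Metric.isBounded_Icc _ _).subset Pkd_subset_Icc)

theorem vJ_mem_extremePoints (hJ : J ⊆ Icc 1 k) (hkd : k < d) :
    vJ d k J ∈ (Pkd k d).extremePoints ℝ := by
  rw [Pkd_eq_setOf_constraint]
  refine mem_extremePoints_of_forall_tight_eq _ (constraint_vJ_nonneg hJ hkd) fun y _ hy =>
    eq_vJ_of_tight hJ hkd (fun i hi => hy (.inl i) (vJ_of_notMem hi)) fun j hj => hy (.inr j) ?_
  rw [constraint_inr_vJ hJ hkd, next_eq_succ hj]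
  push_cast
  ring

theorem constraint_inr_le_of_forall_eq_zero {x : Fin k → ℝ} (hx : ∀ i, 0 ≤ x i) {m j : Fin k}
    (hmj : m ≤ j) (h : ∀ i, m ≤ i → i < j → x i = 0) :
    constraint k d (.inr j) x ≤ constraint k d (.inr m) x := by
  have htotal : 0 ≤ partialSum k k x := by
    rw [partialSum_self]
    exact sum_nonneg fun i _ => hx i
  have hmj' : (m : ℝ) ≤ j := by exact_mod_cast hmj
  rw [constraint_inr, constraint_inr, partialSum_eq_of_forall_eq_zero hmj fun i => h i]
  nlinarith

/-- Along `e_p - e_j` only the partial sums `partialSum k m` with `p < m ≤ j` move, and by `hgap`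
their inequalities are at least as slack as the `j`-th one. -/
theorem notMem_extremePoints_of_gap {x : Fin k → ℝ} (hx : ∀ c, 0 ≤ constraint k d c x)
    {p j : Fin k} (hpj : p < j) (hxp : x p ≠ 0) (hxj : x j ≠ 0)
    (hgap : ∀ i, p < i → i < j → x i = 0) (hslack : 0 < constraint k d (.inr j) x) :
    x ∉ (Pkd k d).extremePoints ℝ := by
  rw [Pkd_eq_setOf_constraint]
  refine notMem_extremePoints_of_forall_tight _ (u := Pi.single p 1 - Pi.single j 1) ?_ ?_
  · intro hu
    simpa [hpj.ne] using congrFun hu p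
  rintro (i | m) htight
  · rw [constraint_inl] at htight
    rw [constraint_inl_linear, Pi.sub_apply, Pi.single_eq_of_ne (by rintro rfl; exact hxp htight),
      Pi.single_eq_of_ne (by rintro rfl; exact hxj htight), sub_zero]
  · rw [constraint_inr_linear, map_sub, map_sub, partialSum_single, partialSum_single,
      partialSum_single, partialSum_single, if_pos p.isLt, if_pos j.isLt]
    simp only [Fin.val_fin_lt]
    by_cases hpm : p < m
    · by_cases hjm : j < m
      · rw [if_pos hpm, if_pos hjm]
        ring
      · have := constraint_inr_le_of_forall_eq_zero (d := d) (x := x) (fun i => hx (.inl i))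
          (not_lt.1 hjm) fun i hmi hij => hgap i (hpm.trans_le hmi) hij
        linarith
    · rw [if_neg hpm, if_neg fun hjm => hpm (hpj.trans hjm)]
      ring

/-- Moving along `x + e_j` multiplies `1 + partialSum k m x` by a common factor for all `m > j`,
so it rescales the inequalities above `j`; those up to `j` are slack by `hbelow`. -/
theorem notMem_extremePoints_of_forall_lt_eq_zero {x : Fin k → ℝ}
    (hx : ∀ c, 0 ≤ constraint k d c x) {j : Fin k} (hxj : x j ≠ 0)
    (hbelow : ∀ i < j, x i = 0) (hslack : 0 < constraint k d (.inr j) x) :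
    x ∉ (Pkd k d).extremePoints ℝ := by
  rw [Pkd_eq_setOf_constraint]
  refine notMem_extremePoints_of_forall_tight _ (u := x + Pi.single j 1) ?_ ?_
  · intro hu
    have := congrFun hu j
    have := hx (.inl j)
    simp only [Pi.add_apply, Pi.single_eq_same, Pi.zero_apply, constraint_inl] at *
    linarith
  rintro (i | m) htight
  · rw [constraint_inl] at htight
    rw [constraint_inl_linear, Pi.add_apply, Pi.single_eq_of_ne (by rintro rfl; exact hxj htight),
      htight, add_zero]
  · rw [constraint_inr_linear, map_add, map_add, partialSum_single, partialSum_single,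
      if_pos j.isLt]
    simp only [Fin.val_fin_lt]
    by_cases hjm : j < m
    · rw [if_pos hjm, ← htight, constraint_inr]
      ring
    · have := constraint_inr_le_of_forall_eq_zero (d := d) (x := x) (fun i => hx (.inl i))
        (not_lt.1 hjm) fun i _ hij => hbelow i hij
      linarith

theorem exists_eq_vJ_of_mem_extremePoints (hkd : k < d) {x : Fin k → ℝ}
    (hx : x ∈ (Pkd k d).extremePoints ℝ) : ∃ J, J ⊆ Icc 1 k ∧ x = vJ d k J := by
  have hmem := mem_Pkd_iff.1 hx.1
  refine ⟨supportIndex x, supportIndex_subset x, eq_vJ_of_tight (supportIndex_subset x) hkd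
    (fun i hi => not_not.1 (mt succ_mem_supportIndex.2 hi)) fun j hj => ?_⟩
  rw [succ_mem_supportIndex] at hj
  by_contra hne
  have hslack : 0 < constraint k d (.inr j) x := (hmem _).lt_of_ne' hne
  by_cases hprev : ∃ p < j, x p ≠ 0
  · obtain ⟨p, hp, hpmax⟩ := (univ.filter fun p => p < j ∧ x p ≠ 0).exists_max_image id
      (by obtain ⟨p, hp⟩ := hprev; exact ⟨p, by simpa using hp⟩)
    rw [mem_filter] at hp
    refine notMem_extremePoints_of_gap hmem hp.2.1 hp.2.2 hj (fun i hpi hij => ?_) hslack hx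
    by_contra hi
    exact (hpmax i (by simp [hij, hi])).not_gt hpi
  · push Not at hprev
    exact notMem_extremePoints_of_forall_lt_eq_zero hmem hj hprev hslack hx

theorem extremePoints_Pkd (hkd : k < d) :
    (Pkd k d).extremePoints ℝ = {v | ∃ J, J ⊆ Icc 1 k ∧ v = vJ d k J} :=
  Set.Subset.antisymm (fun _ hx => exists_eq_vJ_of_mem_extremePoints hkd hx)
    fun _ ⟨_, hJ, hv⟩ => hv ▸ vJ_mem_extremePoints hJ hkd

theorem injOn_vJ (hkd : k < d) : Set.InjOn (vJ d k) {J | J ⊆ Icc 1 k} := fun J hJ J' hJ' h => by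
  rw [← supportIndex_vJ hJ hkd, ← supportIndex_vJ hJ' hkd, h]

theorem finite_vJ : {v | ∃ J, J ⊆ Icc 1 k ∧ v = vJ d k J}.Finite :=
  ((Icc 1 k).powerset.finite_toSet.image (vJ d k)).subset
    fun _ ⟨J, hJ, hv⟩ => ⟨J, mem_coe.2 (mem_powerset.2 hJ), hv.symm⟩

end Pkd

theorem Pkd_polytope_general (k d : ℕ) (hkd : k < d) :
    Bornology.IsBounded (Pkd k d) ∧ Convex ℝ (Pkd k d) ∧
    Pkd k d = convexHull ℝ {v : Fin k → ℝ | ∃ J : Finset ℕ, J ⊆ Finset.Icc 1 k ∧ v = vJ d k J} ∧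
    Set.InjOn (vJ d k) {J : Finset ℕ | J ⊆ Finset.Icc 1 k} ∧
    Set.extremePoints ℝ (Pkd k d)
      = {v : Fin k → ℝ | ∃ J : Finset ℕ, J ⊆ Finset.Icc 1 k ∧ v = vJ d k J} := by
  refine ⟨Pkd.isCompact_Pkd.isBounded, Pkd.convex_Pkd, ?_, Pkd.injOn_vJ hkd,
    Pkd.extremePoints_Pkd hkd⟩
  rw [← (Pkd.finite_vJ.isClosed_convexHull (𝕜 := ℝ)).closure_eq, ← Pkd.extremePoints_Pkd hkd,
    closure_convexHull_extremePoints Pkd.isCompact_Pkd Pkd.convex_Pkd]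

/-- For positive integers `d > k`, `P_{k,d}` is a bounded convex set
equal to the convex hull of the `2^k` pairwise distinct points `v_J`, `J ⊆ {1,…,k}`,
and its extreme points are exactly these points. -/
theorem Pkd_polytope (k d : ℕ) (hk : 0 < k) (hkd : k < d) :
    Bornology.IsBounded (Pkd k d) ∧ Convex ℝ (Pkd k d) ∧
    Pkd k d = convexHull ℝ {v : Fin k → ℝ | ∃ J : Finset ℕ, J ⊆ Finset.Icc 1 k ∧ v = vJ d k J} ∧
    Set.InjOn (vJ d k) {J : Finset ℕ | J ⊆ Finset.Icc 1 k} ∧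
    Set.extremePoints ℝ (Pkd k d)
      = {v : Fin k → ℝ | ∃ J : Finset ℕ, J ⊆ Finset.Icc 1 k ∧ v = vJ d k J} :=
  Pkd_polytope_general k d hkd
end

section
/- Let d > k be positive integers and let J = {j_1 < j_2 < ⋯ < j_n} be a nonempty subset of {1, …, k}. Then for every algebraic integer α of degree d, one has |α_0|^{j_1}·|α_{j_1}|^{j_2 − j_1}·|α_{j_2}|^{j_3 − j_2}⋯|α_{j_n}|^{d − j_n} ≥ |α_0·α_1⋯α_{d−1}| ≥ 1; consequently the point v_J belongs to E_{k,d}. -/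
open Classical in
/-- The successor of `j` in `J`: the smallest element of `J` exceeding `j`, or `d` if
`j` is the largest element of `J`. -/
noncomputable def nextElt (d : ℕ) (J : Finset ℕ) (j : ℕ) : ℕ :=
  if ∃ m ∈ J, j < m then sInf {m : ℕ | m ∈ J ∧ j < m} else d

open Polynomial Finset

namespace Polynomial

theorem coeff_zero_ne_zero_of_irreducible {R : Type*} [CommRing R] [IsDomain R] {p : R[X]}
    (hp : Irreducible p) (hdeg : p.natDegree ≠ 1) : p.coeff 0 ≠ 0 := fun h =>
  hdeg <| by
    rw [← natDegree_eq_of_degree_eq (degree_eq_degree_of_associated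
      (irreducible_X.associated_of_dvd hp (X_dvd_iff.mpr h))), natDegree_X]

/-- The product of the roots is `± p.coeff 0`, a nonzero integer. -/
theorem one_le_norm_prod_roots_map {p : ℤ[X]} (hmon : p.Monic) (h0 : p.coeff 0 ≠ 0) :
    1 ≤ ‖(p.map (Int.castRingHom ℂ)).roots.prod‖ := by
  have hcoeff :=
    (IsAlgClosed.splits (p.map (Int.castRingHom ℂ))).coeff_zero_eq_prod_roots_of_monic
    (hmon.map _)
  calc (1 : ℝ) ≤ |(p.coeff 0 : ℝ)| := by exact_mod_cast Int.one_le_abs h0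
    _ = ‖(p.map (Int.castRingHom ℂ)).coeff 0‖ := by simp
    _ = _ := by simp [hcoeff]

end Polynomial

section NextElt

variable {d : ℕ} {J : Finset ℕ}

theorem nextElt_mem {j : ℕ} (h : ∃ m ∈ J, j < m) : nextElt d J j ∈ J := by
  classical
  obtain ⟨m, hm, hjm⟩ := h
  rw [nextElt, if_pos ⟨m, hm, hjm⟩]
  exact (Nat.sInf_mem (⟨m, hm, hjm⟩ : {m : ℕ | m ∈ J ∧ j < m}.Nonempty)).1

theorem lt_nextElt {j : ℕ} (hjd : j < d) : j < nextElt d J j := by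
  classical
  unfold nextElt
  split_ifs with h
  · obtain ⟨m, hm, hjm⟩ := h
    exact (Nat.sInf_mem (⟨m, hm, hjm⟩ : {m : ℕ | m ∈ J ∧ j < m}.Nonempty)).2
  · exact hjd

theorem nextElt_le_of_mem {j m : ℕ} (hm : m ∈ J) (hjm : j < m) : nextElt d J j ≤ m := by
  classical
  rw [nextElt, if_pos ⟨m, hm, hjm⟩]
  exact Nat.sInf_le ⟨hm, hjm⟩

theorem nextElt_le (hJ : ∀ m ∈ J, m ≤ d) (j : ℕ) : nextElt d J j ≤ d := by
  classical
  by_cases h : ∃ m ∈ J, j < m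
  · exact hJ _ (nextElt_mem h)
  · rw [nextElt, if_neg h]

theorem nextElt_insert_zero : nextElt d (insert 0 J) = nextElt d J := by
  have hzero (j m : ℕ) : (m = 0 ∨ m ∈ J) ∧ j < m ↔ m ∈ J ∧ j < m :=
    ⟨fun ⟨h, hjm⟩ => ⟨h.resolve_left (by omega), hjm⟩,
      fun ⟨hm, hjm⟩ => ⟨Or.inr hm, hjm⟩⟩
  ext j
  simp only [nextElt, mem_insert, hzero]

theorem nextElt_zero (h0 : 0 ∉ J) (hJne : J.Nonempty) : nextElt d J 0 = J.min' hJne := by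
  have hpos : 0 < J.min' hJne := Nat.pos_of_ne_zero fun h => h0 (h ▸ J.min'_mem hJne)
  exact le_antisymm (nextElt_le_of_mem (J.min'_mem hJne) hpos)
    (J.min'_le _ (nextElt_mem ⟨_, J.min'_mem hJne, hpos⟩))

/-- The block containing `i` is the one of the largest `j ∈ S` with `j ≤ i`. -/
theorem range_eq_biUnion_Ico_nextElt {S : Finset ℕ} (h0 : 0 ∈ S) (hS : S ⊆ range d) :
    range d = S.biUnion fun j => Ico j (nextElt d S j) := by
  ext i
  simp only [mem_range, mem_biUnion, mem_Ico]
  constructor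
  · intro hid
    have hne : (S.filter (· ≤ i)).Nonempty := ⟨0, mem_filter.2 ⟨h0, Nat.zero_le i⟩⟩
    obtain ⟨hjS, hji⟩ := mem_filter.1 ((S.filter (· ≤ i)).max'_mem hne)
    refine ⟨_, hjS, hji, ?_⟩
    by_contra! hle
    by_cases h : ∃ m ∈ S, (S.filter (· ≤ i)).max' hne < m
    · exact (lt_nextElt (J := S) (hS hjS |> mem_range.1)).not_ge
        ((S.filter (· ≤ i)).le_max' _ (mem_filter.2 ⟨nextElt_mem h, hle⟩))
    · classical
      rw [nextElt, if_neg h] at hle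
      exact hid.not_ge hle
  · rintro ⟨j, -, -, hi⟩
    exact hi.trans_le (nextElt_le (fun m hm => (mem_range.1 (hS hm)).le) j)

theorem pairwiseDisjoint_Ico_nextElt (S : Finset ℕ) :
    (S : Set ℕ).PairwiseDisjoint fun j => Ico j (nextElt d S j) := by
  have key : ∀ a b, b ∈ S → a < b →
      Disjoint (Ico a (nextElt d S a)) (Ico b (nextElt d S b)) :=
    fun a b hb hab => Ico_disjoint_Ico_consecutive a _ _ |>.mono_right
      (Ico_subset_Ico_left (nextElt_le_of_mem hb hab))
  intro a ha b hb hab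
  rcases hab.lt_or_gt with h | h
  exacts [key a b hb h, (key b a ha h).symm]

end NextElt

section Product

variable {R : Type*} [CommMonoidWithZero R] [PartialOrder R] [ZeroLEOneClass R] [PosMulMono R]
  {d : ℕ} {f : ℕ → R}

/-- On each block `[j, nextElt d S j)` the factors are bounded by the first one. -/
theorem prod_range_le_prod_pow_nextElt (hf0 : ∀ i, 0 ≤ f i) (hf : AntitoneOn f (Set.Iio d))
    {S : Finset ℕ} (h0 : 0 ∈ S) (hS : S ⊆ range d) :
    ∏ i ∈ range d, f i ≤ ∏ j ∈ S, f j ^ (nextElt d S j - j) := by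
  rw [range_eq_biUnion_Ico_nextElt h0 hS, prod_biUnion (pairwiseDisjoint_Ico_nextElt S)]
  refine prod_le_prod (fun _ _ => prod_nonneg fun _ _ => hf0 _) fun j hj => ?_
  have hjd : j < d := mem_range.1 (hS hj)
  calc ∏ i ∈ Ico j (nextElt d S j), f i ≤ ∏ _i ∈ Ico j (nextElt d S j), f j :=
        prod_le_prod (fun _ _ => hf0 _) fun i hi => by
          rw [mem_Ico] at hi
          exact hf hjd (hi.2.trans_le (nextElt_le (fun m hm => (mem_range.1 (hS hm)).le) j)) hi.1
    _ = f j ^ (nextElt d S j - j) := by rw [prod_const, Nat.card_Ico]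

theorem prod_range_le_pow_min'_mul_prod (hf0 : ∀ i, 0 ≤ f i) (hf : AntitoneOn f (Set.Iio d))
    {J : Finset ℕ} (hJd : J ⊆ range d) (h0 : 0 ∉ J) (hJne : J.Nonempty) :
    ∏ i ∈ range d, f i ≤ f 0 ^ J.min' hJne * ∏ j ∈ J, f j ^ (nextElt d J j - j) := by
  have hd : 0 < d := (Nat.zero_le _).trans_lt (mem_range.1 (hJd (J.min'_mem hJne)))
  have := prod_range_le_prod_pow_nextElt hf0 hf (mem_insert_self 0 J)
    (insert_subset (mem_range.2 hd) hJd)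
  rwa [prod_insert h0, nextElt_insert_zero, nextElt_zero h0 hJne, Nat.sub_zero] at this

end Product

section VJ

variable {d k : ℕ} {J : Finset ℕ}

theorem vJ_eq (hkd : k < d) (hJne : J.Nonempty) (i : Fin k) :
    vJ d k J i = if (i : ℕ) + 1 ∈ J then
      ((nextElt d J (i + 1) - (i + 1) : ℕ) : ℝ) / J.min' hJne else 0 := by
  have hle : (i : ℕ) + 1 ≤ nextElt d J (i + 1) := (lt_nextElt (by omega)).le
  have hnext : ((nextElt d J (i + 1) : ℕ) : ℝ) = if ∃ m ∈ J, (i : ℕ) + 1 < m then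
      ((sInf {m : ℕ | m ∈ J ∧ (i : ℕ) + 1 < m} : ℕ) : ℝ) else (d : ℝ) := by
    unfold nextElt; split_ifs <;> rfl
  rw [vJ, ← hnext, ← hJne.csInf_eq_min', Nat.cast_sub hle]
  push_cast
  rfl

theorem vJ_nonneg (hkd : k < d) (hJne : J.Nonempty) (i : Fin k) : 0 ≤ vJ d k J i := by
  rw [vJ_eq hkd hJne]
  split_ifs <;> positivity

theorem prod_fin_ite_succ_mem {M : Type*} [CommMonoid M] (hJ : J ⊆ Icc 1 k) (f : ℕ → M) :
    ∏ i : Fin k, (if (i : ℕ) + 1 ∈ J then f (i + 1) else 1) = ∏ j ∈ J, f j := by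
  have h0 : 0 ∉ J := fun h => by simpa using hJ h
  have hJk : J ⊆ range (k + 1) := hJ.trans fun j hj => by simp at hj ⊢; omega
  rw [← inter_eq_right.2 hJk, ← prod_ite_mem, ← Fin.prod_univ_eq_prod_range,
    Fin.prod_univ_succ]
  simp [h0]

theorem prod_rpow_vJ_pow_min' (hkd : k < d) (hJ : J ⊆ Icc 1 k) (hJne : J.Nonempty)
    {f : ℕ → ℝ} (hf : ∀ i, 0 ≤ f i) :
    (∏ i : Fin k, f (i + 1) ^ vJ d k J i) ^ J.min' hJne =
      ∏ j ∈ J, f j ^ (nextElt d J j - j) := by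
  have hmin : (J.min' hJne : ℝ) ≠ 0 := by
    have := (mem_Icc.1 (hJ (J.min'_mem hJne))).1
    positivity
  rw [← prod_fin_ite_succ_mem hJ, ← prod_pow]
  refine prod_congr rfl fun i _ => ?_
  rw [vJ_eq hkd hJne]
  split_ifs
  · rw [← Real.rpow_natCast _ (J.min' hJne), ← Real.rpow_mul (hf _), div_mul_cancel₀ _ hmin,
      Real.rpow_natCast]
  · simp

end VJ

section SortedRoots

variable {d : ℕ} {r : ℕ → ℂ}

theorem norm_prod_le_of_sortedRoots {q : ℂ[X]} (hs : SortedRoots d q r) {J : Finset ℕ}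
    (hJd : J ⊆ range d) (h0 : 0 ∉ J) (hJne : J.Nonempty) :
    ‖∏ i ∈ range d, r i‖ ≤
      ‖r 0‖ ^ J.min' hJne * ∏ j ∈ J, ‖r j‖ ^ (nextElt d J j - j) := by
  rw [norm_prod]
  exact prod_range_le_pow_min'_mul_prod (fun _ => norm_nonneg _)
    (fun i _ j hj hij => hs.2 i j hij hj) hJd h0 hJne

theorem one_le_norm_prod_of_sortedRoots {p : ℤ[X]} (hmon : p.Monic) (hirr : Irreducible p)
    (hdeg : p.natDegree ≠ 1) (hs : SortedRoots d (p.map (Int.castRingHom ℂ)) r) :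
    1 ≤ ‖∏ i ∈ range d, r i‖ := by
  simpa [hs.1, prod_eq_multiset_prod] using
    one_le_norm_prod_roots_map hmon (coeff_zero_ne_zero_of_irreducible hirr hdeg)

end SortedRoots

theorem vJ_mem_Ekd_general (k d : ℕ) (hkd : k < d)
    (J : Finset ℕ) (hJsub : J ⊆ Finset.Icc 1 k) (hJne : J.Nonempty) :
    (∀ (p : Polynomial ℤ) (r : ℕ → ℂ),
      p.Monic → Irreducible p → p.natDegree = d →
      SortedRoots d (p.map (Int.castRingHom ℂ)) r →
      ‖∏ i ∈ Finset.range d, r i‖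
          ≤ ‖r 0‖ ^ (J.min' hJne)
            * ∏ j ∈ J, ‖r j‖ ^ (nextElt d J j - j) ∧
      1 ≤ ‖∏ i ∈ Finset.range d, r i‖) ∧
    vJ d k J ∈ Ekd k d := by
  have h0 : 0 ∉ J := fun h => by simpa using hJsub h
  have hJd : J ⊆ range d := hJsub.trans fun j hj => by simp at hj ⊢; omega
  have hmin := mem_Icc.1 (hJsub (J.min'_mem hJne))
  refine ⟨fun p r hmon hirr hdeg hs => ⟨norm_prod_le_of_sortedRoots hs hJd h0 hJne,
    one_le_norm_prod_of_sortedRoots hmon hirr (by omega) hs⟩, vJ_nonneg hkd hJne,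
    fun p r hmon hirr hdeg hs => ?_⟩
  refine (one_le_pow_iff_of_nonneg (by positivity) (by omega : J.min' hJne ≠ 0)).1 ?_
  rw [mul_pow, prod_rpow_vJ_pow_min' hkd hJsub hJne fun _ => norm_nonneg _]
  exact (one_le_norm_prod_of_sortedRoots hmon hirr (by omega) hs).trans
    (norm_prod_le_of_sortedRoots hs hJd h0 hJne)

/-- Let `d > k ≥ 1` and let `J = {j_1 < ⋯ < j_n}` be a nonempty
subset of `{1,…,k}`.  For every algebraic integer `α` of degree `d`,
`|α_0|^{j_1} |α_{j_1}|^{j_2-j_1} ⋯ |α_{j_n}|^{d-j_n} ≥ |α_0 α_1 ⋯ α_{d-1}| ≥ 1`;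
consequently `v_J ∈ E_{k,d}`. -/
theorem vJ_mem_Ekd (k d : ℕ) (hk : 0 < k) (hkd : k < d)
    (J : Finset ℕ) (hJsub : J ⊆ Finset.Icc 1 k) (hJne : J.Nonempty) :
    (∀ (p : Polynomial ℤ) (r : ℕ → ℂ),
      p.Monic → Irreducible p → p.natDegree = d →
      SortedRoots d (p.map (Int.castRingHom ℂ)) r →
      ‖∏ i ∈ Finset.range d, r i‖
          ≤ ‖r 0‖ ^ (J.min' hJne)
            * ∏ j ∈ J, ‖r j‖ ^ (nextElt d J j - j) ∧
      1 ≤ ‖∏ i ∈ Finset.range d, r i‖) ∧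
    vJ d k J ∈ Ekd k d :=
  vJ_mem_Ekd_general k d hkd J hJsub hJne
end

section
/- Let d ≥ 3 be an integer. There exists a constant C > 0 depending only on d such that the following holds: for every algebraic unit α of degree d that is not a root of unity, with H the height of its minimal polynomial, if there exists an integer m with 0 < m < d−1 such that |α_m| ≤ 1 and 0 < |α_m| − |α_{d−1}| < |α_0|^{−1/(d−1)}, then |α_0| ≥ C·H^{1/m}. -/
/-!
Since `|α_m| ≤ 1`, only the roots `α_0, …, α_{m-1}` can lie outside the unit disc, and each has
modulus at most `|α_0|`; hence the Mahler measure of `p` is at most `|α_0|^m`, using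
`|α_0| ≥ 1`, which holds because the roots of a unit multiply to `±1`. Every coefficient of `p` is
at most a binomial coefficient times the Mahler measure, so `H ≤ 2^d |α_0|^m`, i.e.
`|α_0| ≥ 2^{-d} H^{1/m}`.
-/

def polyHeight (p : Polynomial ℤ) : ℕ :=
  p.support.sup fun i => (p.coeff i).natAbs

open Polynomial

namespace SortedRoots

variable {d : ℕ} {q : ℂ[X]} {r : ℕ → ℂ}

lemma prod_map_roots {M : Type*} [CommMonoid M] (hr : SortedRoots d q r) (f : ℂ → M) :
    (q.roots.map f).prod = ∏ i ∈ Finset.range d, f (r i) := by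
  rw [hr.1, Multiset.map_map, Finset.prod_eq_multiset_prod]
  rfl

lemma one_le_norm_zero (hr : SortedRoots d q r) (hq : q.Monic) (hd : d ≠ 0)
    (h0 : 1 ≤ ‖q.coeff 0‖) : 1 ≤ ‖r 0‖ := by
  have hprod : ‖q.coeff 0‖ = ∏ i ∈ Finset.range d, ‖r i‖ := by
    rw [(IsAlgClosed.splits q).coeff_zero_eq_prod_roots_of_monic hq, norm_mul, norm_pow,
      norm_neg, norm_one, one_pow, one_mul, ← Multiset.map_id q.roots, hr.prod_map_roots, norm_prod]
    rfl
  have : 1 ≤ ‖r 0‖ ^ d := by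
    calc 1 ≤ ∏ i ∈ Finset.range d, ‖r i‖ := hprod ▸ h0
      _ ≤ ∏ _i ∈ Finset.range d, ‖r 0‖ :=
        Finset.prod_le_prod (fun _ _ => norm_nonneg _)
          fun i hi => hr.2 0 i i.zero_le (Finset.mem_range.1 hi)
      _ = ‖r 0‖ ^ d := by rw [Finset.prod_const, Finset.card_range]
  exact (one_le_pow_iff_of_nonneg (norm_nonneg _) hd).1 this

lemma mahlerMeasure_le_pow (hr : SortedRoots d q r) (hq : q.Monic) {m : ℕ} (hrm : ‖r m‖ ≤ 1)
    (h1 : 1 ≤ ‖r 0‖) : q.mahlerMeasure ≤ ‖r 0‖ ^ m := by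
  classical
  rw [mahlerMeasure_eq_leadingCoeff_mul_prod_roots, hq.leadingCoeff, norm_one, one_mul,
    hr.prod_map_roots]
  calc ∏ i ∈ Finset.range d, max 1 ‖r i‖
      ≤ ∏ i ∈ Finset.range d, if i < m then ‖r 0‖ else 1 := by
        refine Finset.prod_le_prod (fun _ _ => zero_le_one.trans (le_max_left _ _)) fun i hi => ?_
        have hid := Finset.mem_range.1 hi
        split_ifs with him
        · exact max_le h1 (hr.2 0 i i.zero_le hid)
        · exact max_le le_rfl ((hr.2 m i (not_lt.1 him) hid).trans hrm)
    _ = ‖r 0‖ ^ ((Finset.range d).filter (· < m)).card := by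
        rw [Finset.prod_ite, Finset.prod_const, Finset.prod_const_one, mul_one]
    _ ≤ ‖r 0‖ ^ m := by
        refine pow_le_pow_right₀ h1 (le_of_le_of_eq (Finset.card_le_card fun i => ?_)
          (Finset.card_range m))
        simp only [Finset.mem_filter, Finset.mem_range]
        exact And.right

end SortedRoots

lemma polyHeight_le_two_pow_mul_mahlerMeasure (p : ℤ[X]) :
    (polyHeight p : ℝ) ≤ 2 ^ p.natDegree * (p.map (Int.castRingHom ℂ)).mahlerMeasure := by
  rcases p.support.eq_empty_or_nonempty with h | h
  · simp [polyHeight, h, mahlerMeasure_nonneg]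
  obtain ⟨k, -, hk⟩ := Finset.exists_mem_eq_sup p.support h fun i => (p.coeff i).natAbs
  have hcoeff := norm_coeff_le_choose_mul_mahlerMeasure k (p.map (Int.castRingHom ℂ))
  rw [natDegree_map_eq_of_injective (RingHom.injective_int _), coeff_map] at hcoeff
  calc (polyHeight p : ℝ) = ‖(Int.castRingHom ℂ) (p.coeff k)‖ := by
        rw [polyHeight, hk, eq_intCast, Complex.norm_intCast, Nat.cast_natAbs, Int.cast_abs]
    _ ≤ _ := hcoeff
    _ ≤ _ := by
        gcongr
        · exact mahlerMeasure_nonneg _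
        · exact_mod_cast Nat.choose_le_two_pow _ _

lemma rpow_inv_le_mul_of_le_mul_pow {H B A : ℝ} {m : ℕ} (hH : 0 ≤ H) (hB : 1 ≤ B) (hA : 0 ≤ A)
    (hm : 0 < m) (h : H ≤ B * A ^ m) : H ^ (m : ℝ)⁻¹ ≤ B * A := by
  rw [Real.rpow_inv_le_iff_of_pos hH (by positivity) (by exact_mod_cast hm), Real.rpow_natCast,
    mul_pow]
  exact h.trans (mul_le_mul_of_nonneg_right (le_self_pow₀ hB hm.ne') (by positivity))

theorem lemma_adapt_a_general (d : ℕ) :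
    ∃ C : ℝ, 0 < C ∧
      ∀ (p : Polynomial ℤ) (α : ℂ) (r : ℕ → ℂ) (m : ℕ),
        p.Monic → Irreducible p → p.natDegree = d →
        Polynomial.aeval α p = 0 →
        (p.coeff 0 = 1 ∨ p.coeff 0 = -1) →
        (∀ n : ℕ, 0 < n → α ^ n ≠ 1) →
        SortedRoots d (p.map (Int.castRingHom ℂ)) r →
        0 < m → m < d - 1 →
        ‖r m‖ ≤ 1 →
        0 < ‖r m‖ - ‖r (d - 1)‖ →
        ‖r m‖ - ‖r (d - 1)‖
            < ‖r 0‖ ^ (-(1 / ((d : ℝ) - 1))) →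
        C * (polyHeight p : ℝ) ^ ((m : ℝ)⁻¹) ≤ ‖r 0‖ := by
  refine ⟨(2 ^ d)⁻¹, by positivity, ?_⟩
  intro p _ r m hp _ hdeg _ hunit _ hr hm hmd hrm _ _
  have hq := hp.map (Int.castRingHom ℂ)
  have hA : 1 ≤ ‖r 0‖ := hr.one_le_norm_zero hq (by omega) <| by
    rcases hunit with h | h <;> simp [coeff_map, h]
  have hH : (polyHeight p : ℝ) ≤ 2 ^ d * ‖r 0‖ ^ m := hdeg ▸
    (polyHeight_le_two_pow_mul_mahlerMeasure p).trans
      (by gcongr; exact hr.mahlerMeasure_le_pow hq hrm hA)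
  rw [inv_mul_le_iff₀ (by positivity)]
  exact rpow_inv_le_mul_of_le_mul_pow (Nat.cast_nonneg _) (one_le_pow₀ one_le_two)
    (norm_nonneg _) hm hH

/-- For `d ≥ 3` there is `C > 0` depending only on `d` such that:
for every algebraic unit `α` of degree `d` that is not a root of unity, with `H` the
height of its minimal polynomial, if `0 < m < d-1` satisfies `|α_m| ≤ 1` and
`0 < |α_m| - |α_{d-1}| < |α_0|^{-1/(d-1)}`, then `|α_0| ≥ C H^{1/m}`. -/
theorem lemma_adapt_a (d : ℕ) (hd : 3 ≤ d) :
    ∃ C : ℝ, 0 < C ∧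
      ∀ (p : Polynomial ℤ) (α : ℂ) (r : ℕ → ℂ) (m : ℕ),
        p.Monic → Irreducible p → p.natDegree = d →
        Polynomial.aeval α p = 0 →
        (p.coeff 0 = 1 ∨ p.coeff 0 = -1) →
        (∀ n : ℕ, 0 < n → α ^ n ≠ 1) →
        SortedRoots d (p.map (Int.castRingHom ℂ)) r →
        0 < m → m < d - 1 →
        ‖r m‖ ≤ 1 →
        0 < ‖r m‖ - ‖r (d - 1)‖ →
        ‖r m‖ - ‖r (d - 1)‖
            < ‖r 0‖ ^ (-(1 / ((d : ℝ) - 1))) →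
        C * (polyHeight p : ℝ) ^ ((m : ℝ)⁻¹) ≤ ‖r 0‖ :=
  lemma_adapt_a_general d
end
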